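/- arXiv:1611.03246 — 4 statements merged into one kernel-verified Lean document; each statement's English description precedes it below -/
import Mathlib

section
/- For any ω ∈ S^{n-1}, h(ω) = sup_{x ∈ C} x · ω; that is, h is the support function of the convex body C. -/
open Set Metric
open scoped RealInnerProductSpace Classical

noncomputable section

/-- positive 1-homogeneity of `h` -/
def IsPosHom {n : ℕ} (h : EuclideanSpace ℝ (Fin n) → ℝ) : Prop :=
  ∀ t : ℝ, 0 < t → ∀ x, h (t • x) = t * h x

/-- the convex body `C = ⋂_{ω ∈ S^{n-1}} {x : x·ω ≤ h(ω)}` -/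
def setC {n : ℕ} (h : EuclideanSpace ℝ (Fin n) → ℝ) : Set (EuclideanSpace ℝ (Fin n)) :=
  ⋂ ω ∈ sphere (0 : EuclideanSpace ℝ (Fin n)) 1, {x | ⟪x, ω⟫ ≤ h ω}

/-- the gauge norm `‖p‖_C = 1 / sup{τ>0 : τp ∈ C}` (with `‖0‖_C = 0`) -/
def normC {n : ℕ} (C : Set (EuclideanSpace ℝ (Fin n))) (p : EuclideanSpace ℝ (Fin n)) : ℝ :=
  if p = 0 then 0 else 1 / sSup {τ : ℝ | 0 < τ ∧ τ • p ∈ C}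

/-- the anisotropic ball `C_R(z₀) = z₀ + R·C` -/
def ballC {n : ℕ} (C : Set (EuclideanSpace ℝ (Fin n))) (z₀ : EuclideanSpace ℝ (Fin n)) (R : ℝ) :
    Set (EuclideanSpace ℝ (Fin n)) := {x | ∃ y ∈ C, x = z₀ + R • y}

/-- values `ℓ(x) = ω·x + c` of affine functions with `h(ω)=1` that are nonnegative on `K` -/
def admissible {n : ℕ} (h : EuclideanSpace ℝ (Fin n) → ℝ) (K : Set (EuclideanSpace ℝ (Fin n)))
    (x : EuclideanSpace ℝ (Fin n)) : Set ℝ :=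
  {v | ∃ ω c, h ω = 1 ∧ (∀ y ∈ K, 0 ≤ ⟪ω, y⟫ + c) ∧ v = ⟪ω, x⟫ + c}

/-- the anisotropic signed distance function `d_K` -/
def dK {n : ℕ} (h : EuclideanSpace ℝ (Fin n) → ℝ) (K : Set (EuclideanSpace ℝ (Fin n)))
    (x : EuclideanSpace ℝ (Fin n)) : ℝ := sInf (admissible h K x)

/-- `∂C` is `C¹`: the (outer unit normal of the) supporting hyperplane at any
boundary point is unique -/
def UniqueSupport {n : ℕ} (C : Set (EuclideanSpace ℝ (Fin n))) : Prop :=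
  ∀ P ∈ frontier C, ∀ ω₁ ∈ sphere (0 : EuclideanSpace ℝ (Fin n)) 1,
    ∀ ω₂ ∈ sphere (0 : EuclideanSpace ℝ (Fin n)) 1,
      (∀ x ∈ C, ⟪ω₁, x - P⟫ ≤ 0) → (∀ x ∈ C, ⟪ω₂, x - P⟫ ≤ 0) → ω₁ = ω₂

/-- `h` is the support function of the convex body `C`. -/
theorem h_eq_support_function (n : ℕ) (h : EuclideanSpace ℝ (Fin n) → ℝ)
    (hcont : Continuous h) (hnonneg : ∀ x, 0 ≤ h x) (hhom : IsPosHom h)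
    (hbd : Bornology.IsBounded (setC h)) (hconv : Convex ℝ (setC h))
    (h0 : (0 : EuclideanSpace ℝ (Fin n)) ∈ interior (setC h))
    (hC1 : UniqueSupport (setC h)) :
    ∀ ω ∈ sphere (0 : EuclideanSpace ℝ (Fin n)) 1,
      h ω = sSup {v : ℝ | ∃ x ∈ setC h, v = ⟪x, ω⟫} := by

  intro ω hω
  have hω1 : ‖ω‖ = 1 := by simpa using mem_sphere_zero_iff_norm.mp hω
  have hmem : ∀ x, x ∈ setC h ↔ ∀ w ∈ sphere (0 : EuclideanSpace ℝ (Fin n)) 1,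
      ⟪x, w⟫ ≤ h w := by
    intro x; simp [setC]
  have hCclosed : IsClosed (setC h) := by
    refine isClosed_biInter fun w _ => ?_
    have hc : Continuous fun x : EuclideanSpace ℝ (Fin n) => (⟪x, w⟫ : ℝ) :=
      continuous_id.inner continuous_const
    exact isClosed_le hc continuous_const
  have hCcompact : IsCompact (setC h) :=
    Metric.isCompact_of_isClosed_isBounded hCclosed hbd
  have h0C : (0 : EuclideanSpace ℝ (Fin n)) ∈ setC h := interior_subset h0
  have hcω : Continuous fun x : EuclideanSpace ℝ (Fin n) => (⟪x, ω⟫ : ℝ) :=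
    continuous_id.inner continuous_const
  obtain ⟨P, hPC, hPmax⟩ := hCcompact.exists_isMaxOn
    (f := fun x : EuclideanSpace ℝ (Fin n) => (⟪x, ω⟫ : ℝ)) ⟨0, h0C⟩ hcω.continuousOn
  have hgreat : IsGreatest {v : ℝ | ∃ x ∈ setC h, v = ⟪x, ω⟫} ⟪P, ω⟫ := by
    constructor
    · exact ⟨P, hPC, rfl⟩
    · rintro v ⟨x, hx, rfl⟩
      exact hPmax hx
  rw [hgreat.csSup_eq]
  have hPle : ⟪P, ω⟫ ≤ h ω := (hmem P).mp hPC ω hω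
  refine le_antisymm ?_ hPle
  -- frontier membership
  have hPfr : P ∈ frontier (setC h) := by
    rw [frontier, hCclosed.closure_eq]
    refine ⟨hPC, fun hPint => ?_⟩
    obtain ⟨ε, hε, hball'⟩ := Metric.isOpen_iff.mp isOpen_interior P hPint
    have hball : Metric.ball P ε ⊆ setC h := hball'.trans interior_subset
    have hmemb : P + (ε/2) • ω ∈ setC h := by
      apply hball
      simp only [Metric.mem_ball, dist_eq_norm]
      have : P + (ε/2) • ω - P = (ε/2) • ω := by abel
      rw [this, norm_smul, hω1, mul_one, Real.norm_eq_abs, abs_of_pos (half_pos hε)]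
      linarith
    have h5 : ⟪P + (ε/2) • ω, ω⟫ ≤ ⟪P, ω⟫ := hPmax hmemb
    rw [inner_add_left, real_inner_smul_left, real_inner_self_eq_norm_sq, hω1] at h5
    nlinarith
  -- for each k, find a violated constraint for P + (1/(k+1)) ω
  have hout : ∀ k : ℕ, ∃ w, w ∈ sphere (0 : EuclideanSpace ℝ (Fin n)) 1 ∧
      h w < ⟪P + (1/(k+1 : ℝ)) • ω, w⟫ := by
    intro k
    by_contra hcon
    push_neg at hcon
    have hmemb : P + (1/(k+1 : ℝ)) • ω ∈ setC h :=
      (hmem _).mpr fun w hw => hcon w hw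
    have h5 : ⟪P + (1/(k+1 : ℝ)) • ω, ω⟫ ≤ ⟪P, ω⟫ := hPmax hmemb
    rw [inner_add_left, real_inner_smul_left, real_inner_self_eq_norm_sq, hω1] at h5
    have hk : (0:ℝ) < 1/(k+1 : ℝ) := by positivity
    nlinarith
  choose w hwsph hwlt using hout
  obtain ⟨ωb, hωb, φ, hφ, hconv⟩ := (isCompact_sphere (0 : EuclideanSpace ℝ (Fin n)) 1).tendsto_subseq hwsph
  have htend0 : Filter.Tendsto (fun k : ℕ => (1/(φ k + 1 : ℝ))) Filter.atTop (nhds 0) :=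
    tendsto_one_div_add_atTop_nhds_zero_nat.comp hφ.tendsto_atTop
  have htendP : Filter.Tendsto (fun k : ℕ => P + (1/(φ k + 1 : ℝ)) • ω) Filter.atTop
      (nhds P) := by
    have : Filter.Tendsto (fun k : ℕ => (1/(φ k + 1 : ℝ)) • ω) Filter.atTop
        (nhds ((0:ℝ) • ω)) := htend0.smul_const ω
    simpa using Filter.Tendsto.const_add P this
  have h1 : Filter.Tendsto (fun k => h (w (φ k))) Filter.atTop (nhds (h ωb)) :=
    (hcont.tendsto ωb).comp hconv
  have h2 : Filter.Tendsto (fun k => ⟪P + (1/(φ k + 1 : ℝ)) • ω, w (φ k)⟫)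
      Filter.atTop (nhds ⟪P, ωb⟫) := htendP.inner hconv
  have hle : h ωb ≤ ⟪P, ωb⟫ :=
    le_of_tendsto_of_tendsto' h1 h2 fun k => (hwlt (φ k)).le
  have hsup1 : ∀ x ∈ setC h, ⟪ωb, x - P⟫ ≤ 0 := by
    intro x hx
    rw [inner_sub_right]
    have h3 : ⟪ωb, x⟫ ≤ h ωb := by rw [real_inner_comm]; exact (hmem x).mp hx ωb hωb
    have h4 : ⟪ωb, P⟫ = ⟪P, ωb⟫ := real_inner_comm _ _
    linarith
  have hsup2 : ∀ x ∈ setC h, ⟪ω, x - P⟫ ≤ 0 := by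
    intro x hx
    rw [inner_sub_right]
    have h3 : ⟪ω, x⟫ ≤ ⟪ω, P⟫ := by
      calc ⟪ω, x⟫ = ⟪x, ω⟫ := real_inner_comm _ _
        _ ≤ ⟪P, ω⟫ := hPmax hx
        _ = ⟪ω, P⟫ := real_inner_comm _ _
    linarith
  have heq : ωb = ω := hC1 P hPfr ωb hωb ω hω hsup1 hsup2
  rw [heq] at hle
  exact hle
end
end

section
/- Suppose t₀ ∈ ℝ, z₀ ∈ { d_K > t₀ }, R > 0, and p ∈ ∂C_R(z₀) ∩ { d_K = t₀ } with C_R(z₀) ⊆ { d_K ≥ t₀ }. If ω₀ is the interior normal of C_R(z₀) at p, then the optimal affine function ℓ_p realizing d_K(p) has slope ω_p = ω₀ / h(ω₀) and constant c_p = t₀ − (ω₀ / h(ω₀)) · p. -/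
open Set Metric
open scoped RealInnerProductSpace Classical

noncomputable section

/-- the optimal affine function at a point of tangency of an anisotropic
ball with a level set of `d_K` has slope `ω₀/h(ω₀)` and constant `t₀ − (ω₀/h(ω₀))·p`. -/
theorem optimal_affine_at_tangency (n : ℕ) (h : EuclideanSpace ℝ (Fin n) → ℝ)
    (hcont : Continuous h) (hnonneg : ∀ x, 0 ≤ h x) (hhom : IsPosHom h)
    (heven : ∀ x, h (-x) = h x)
    (hbd : Bornology.IsBounded (setC h)) (hconv : Convex ℝ (setC h))
    (h0 : (0 : EuclideanSpace ℝ (Fin n)) ∈ interior (setC h))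
    (hC1 : UniqueSupport (setC h))
    (K : Set (EuclideanSpace ℝ (Fin n))) (hKne : K.Nonempty) (hKcl : IsClosed K)
    (hKconv : Convex ℝ K)
    (t₀ : ℝ) (z₀ p : EuclideanSpace ℝ (Fin n)) (R : ℝ) (hR : 0 < R)
    (hz₀ : t₀ < dK h K z₀)
    (hp : p ∈ frontier (ballC (setC h) z₀ R)) (hpt : dK h K p = t₀)
    (hsub : ballC (setC h) z₀ R ⊆ {x | t₀ ≤ dK h K x})
    (ω₀ : EuclideanSpace ℝ (Fin n)) (hω₀ : ω₀ ∈ sphere (0 : EuclideanSpace ℝ (Fin n)) 1)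
    (hnormal : ∀ x ∈ ballC (setC h) z₀ R, 0 ≤ ⟪ω₀, x - p⟫)
    (hpos : 0 < h ω₀)
    (ω_p : EuclideanSpace ℝ (Fin n)) (c_p : ℝ)
    (hωp : h ω_p = 1) (hℓnn : ∀ y ∈ K, 0 ≤ ⟪ω_p, y⟫ + c_p)
    (hattain : dK h K p = ⟪ω_p, p⟫ + c_p) :
    ω_p = (h ω₀)⁻¹ • ω₀ ∧ c_p = t₀ - ⟪(h ω₀)⁻¹ • ω₀, p⟫ := by
  classical
  -- h 0 = 0
  have h0' : h 0 = 0 := by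
    have := hhom 2 (by norm_num) 0
    rw [smul_zero] at this; linarith
  -- a lower bound for h on the sphere
  obtain ⟨ε, hε, hballsub⟩ := Metric.mem_nhds_iff.mp (mem_interior_iff_mem_nhds.mp h0)
  have hlow : ∀ u : EuclideanSpace ℝ (Fin n), ‖u‖ = 1 → ε / 2 ≤ h u := by
    intro u hu
    have hmem : (ε / 2) • u ∈ setC h := by
      apply hballsub
      simp only [Metric.mem_ball, dist_zero_right, norm_smul, hu, mul_one, Real.norm_eq_abs,
        abs_of_pos (by linarith : (0:ℝ) < ε / 2)]
      linarith
    have hsph : u ∈ sphere (0 : EuclideanSpace ℝ (Fin n)) 1 := by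
      simpa [mem_sphere_iff_norm] using hu
    have := Set.mem_iInter₂.mp hmem u hsph
    rw [Set.mem_setOf_eq, real_inner_smul_left, real_inner_self_eq_norm_sq, hu] at this
    simpa using this
  have hlow' : ∀ ω : EuclideanSpace ℝ (Fin n), (ε / 2) * ‖ω‖ ≤ h ω := by
    intro ω
    rcases eq_or_ne ω 0 with rfl | hω
    · simp [h0']
    · have hn : 0 < ‖ω‖ := norm_pos_iff.mpr hω
      have hu : ‖(‖ω‖⁻¹ • ω)‖ = 1 := by
        simp [norm_smul, abs_of_pos (inv_pos.mpr hn), inv_mul_cancel₀ hn.ne']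
      have heq : h ω = ‖ω‖ * h (‖ω‖⁻¹ • ω) := by
        have := hhom ‖ω‖ hn (‖ω‖⁻¹ • ω)
        rwa [smul_smul, mul_inv_cancel₀ hn.ne', one_smul] at this
      have := hlow _ hu
      nlinarith
  obtain ⟨y₀, hy₀⟩ := hKne
  -- admissible sets are bounded below
  have hbdd : ∀ x, BddBelow (admissible h K x) := by
    intro x
    refine ⟨-((2 / ε) * ‖x - y₀‖), ?_⟩
    rintro v ⟨ω, c, hω1, hnn, rfl⟩
    have hωn : ‖ω‖ ≤ 2 / ε := by
      have := hlow' ω; rw [hω1] at this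
      rw [le_div_iff₀ hε]; nlinarith
    have h1 : ⟪ω, x⟫ + c = ⟪ω, x - y₀⟫ + (⟪ω, y₀⟫ + c) := by
      rw [inner_sub_right]; ring
    have h2 : (0:ℝ) ≤ ⟪ω, y₀⟫ + c := hnn y₀ hy₀
    have h3 : -(‖ω‖ * ‖x - y₀‖) ≤ ⟪ω, x - y₀⟫ :=
      neg_le_of_abs_le (abs_real_inner_le_norm ω (x - y₀))
    have h4 : ‖ω‖ * ‖x - y₀‖ ≤ (2 / ε) * ‖x - y₀‖ :=
      mul_le_mul_of_nonneg_right hωn (norm_nonneg _)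
    linarith
  have hdle : ∀ x, dK h K x ≤ ⟪ω_p, x⟫ + c_p := fun x =>
    csInf_le (hbdd x) ⟨ω_p, c_p, hωp, hℓnn, rfl⟩
  -- ballC is the homeomorphic image of setC
  set e : EuclideanSpace ℝ (Fin n) ≃ₜ EuclideanSpace ℝ (Fin n) :=
    (Homeomorph.smulOfNeZero R hR.ne').trans (Homeomorph.addLeft z₀) with he
  have hef : ∀ y, e y = z₀ + R • y := fun y => rfl
  have himg : ballC (setC h) z₀ R = e '' (setC h) := by
    ext x
    constructor
    · rintro ⟨y, hy, rfl⟩; exact ⟨y, hy, (hef y).symm ▸ rfl⟩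
    · rintro ⟨y, hy, rfl⟩; exact ⟨y, hy, (hef y).symm⟩
  have hfr : frontier (ballC (setC h) z₀ R) = e '' frontier (setC h) := by
    rw [himg, e.image_frontier]
  obtain ⟨P, hPfr, hpe⟩ : ∃ P ∈ frontier (setC h), e P = p := by
    rw [hfr] at hp; exact hp
  have hpP : p = z₀ + R • P := by rw [← hpe, hef]
  -- ω_p is also an interior normal
  have hkey : ∀ x ∈ ballC (setC h) z₀ R, 0 ≤ ⟪ω_p, x - p⟫ := by
    intro x hx
    have h1 : t₀ ≤ dK h K x := hsub hx
    have h2 : dK h K x ≤ ⟪ω_p, x⟫ + c_p := hdle x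
    have h3 : ⟪ω_p, p⟫ + c_p = t₀ := by rw [← hattain, hpt]
    rw [inner_sub_right]; linarith
  -- supporting hyperplane conversion
  have hsupp : ∀ ω : EuclideanSpace ℝ (Fin n),
      (∀ x ∈ ballC (setC h) z₀ R, 0 ≤ ⟪ω, x - p⟫) →
      ∀ y ∈ setC h, ⟪-ω, y - P⟫ ≤ 0 := by
    intro ω hω y hy
    have hx : z₀ + R • y ∈ ballC (setC h) z₀ R := ⟨y, hy, rfl⟩
    have h1 := hω _ hx
    have heq : (z₀ + R • y) - p = R • (y - P) := by
      rw [hpP, smul_sub]; abel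
    rw [heq, real_inner_smul_right] at h1
    have h2 : 0 ≤ ⟪ω, y - P⟫ := nonneg_of_mul_nonneg_right h1 hR
    rw [inner_neg_left]; linarith
  -- normalize ω_p
  have hωpne : ω_p ≠ 0 := by
    intro hc; rw [hc, h0'] at hωp; norm_num at hωp
  have hnp : 0 < ‖ω_p‖ := norm_pos_iff.mpr hωpne
  set u : EuclideanSpace ℝ (Fin n) := ‖ω_p‖⁻¹ • ω_p with hu
  have hunorm : ‖u‖ = 1 := by
    simp [hu, norm_smul, abs_of_pos (inv_pos.mpr hnp), inv_mul_cancel₀ hnp.ne']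
  have hsupp₂ : ∀ y ∈ setC h, ⟪-u, y - P⟫ ≤ 0 := by
    intro y hy
    have h1 := hsupp ω_p hkey y hy
    rw [inner_neg_left] at h1
    have h2 : (0:ℝ) ≤ ⟪ω_p, y - P⟫ := by linarith
    rw [hu, inner_neg_left, real_inner_smul_left]
    have h3 := mul_nonneg (inv_pos.mpr hnp).le h2
    linarith
  have hsupp₁ : ∀ y ∈ setC h, ⟪-ω₀, y - P⟫ ≤ 0 := hsupp ω₀ hnormal
  have hω₀s : -ω₀ ∈ sphere (0 : EuclideanSpace ℝ (Fin n)) 1 := by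
    simpa [mem_sphere_iff_norm] using (mem_sphere_zero_iff_norm.mp hω₀)
  have hus : -u ∈ sphere (0 : EuclideanSpace ℝ (Fin n)) 1 := by
    simpa [mem_sphere_iff_norm] using hunorm
  have heqω : -ω₀ = -u := hC1 P hPfr (-ω₀) hω₀s (-u) hus hsupp₁ hsupp₂
  have hω₀u : ω₀ = u := by
    have := neg_injective heqω; exact this
  have hωpval : ω_p = ‖ω_p‖ • ω₀ := by
    rw [hω₀u, hu, smul_smul, mul_inv_cancel₀ hnp.ne', one_smul]
  have hnorm_eq : ‖ω_p‖ = (h ω₀)⁻¹ := by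
    have h1 : h ω_p = ‖ω_p‖ * h ω₀ := by
      conv_lhs => rw [hωpval]
      exact hhom ‖ω_p‖ hnp ω₀
    rw [hωp] at h1
    field_simp
    linarith
  have hfirst : ω_p = (h ω₀)⁻¹ • ω₀ := by rw [hωpval, hnorm_eq]
  refine ⟨hfirst, ?_⟩
  rw [← hfirst, ← hpt, hattain]; ring
end
end

section
/- Let K be convex, t₀ ∈ ℝ, z₀ ∈ { d_K > t₀ }, and suppose C_R(z₀) ⊆ { d_K ≥ t₀ } and z ∈ ∂C_R(z₀) ∩ { d_K = t₀ }. Let ω₀ be the interior normal of C_R(z₀) at z, and assume { d_K ≥ t₀ } ⊆ { x : ω₀·(x−z) ≥ 0 }. Then for every x ∈ ℝⁿ, d_K(x) ≤ (ω₀ / h(ω₀)) · (x − z) + t₀. -/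
open Set Metric
open scoped RealInnerProductSpace Classical

noncomputable section

/-- comparison of `d_K` with the affine function determined by the
interior normal at a point of tangency. -/
theorem dK_le_affine (n : ℕ) (h : EuclideanSpace ℝ (Fin n) → ℝ)
    (hcont : Continuous h) (hnonneg : ∀ x, 0 ≤ h x) (hhom : IsPosHom h)
    (heven : ∀ x, h (-x) = h x)
    (hbd : Bornology.IsBounded (setC h)) (hconv : Convex ℝ (setC h))
    (h0 : (0 : EuclideanSpace ℝ (Fin n)) ∈ interior (setC h))
    (hC1 : UniqueSupport (setC h))
    (K : Set (EuclideanSpace ℝ (Fin n))) (hKne : K.Nonempty) (hKcl : IsClosed K)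
    (hKconv : Convex ℝ K)
    (t₀ : ℝ) (z₀ z : EuclideanSpace ℝ (Fin n)) (R : ℝ) (hR : 0 < R)
    (hz₀ : t₀ < dK h K z₀)
    (hsub : ballC (setC h) z₀ R ⊆ {x | t₀ ≤ dK h K x})
    (hz : z ∈ frontier (ballC (setC h) z₀ R)) (hzt : dK h K z = t₀)
    (ω₀ : EuclideanSpace ℝ (Fin n)) (hω₀ : ω₀ ∈ sphere (0 : EuclideanSpace ℝ (Fin n)) 1)
    (hnormal : ∀ x ∈ ballC (setC h) z₀ R, 0 ≤ ⟪ω₀, x - z⟫)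
    (hlevel : {x | t₀ ≤ dK h K x} ⊆ {x | 0 ≤ ⟪ω₀, x - z⟫})
    (hpos : 0 < h ω₀) :
    ∀ x : EuclideanSpace ℝ (Fin n), dK h K x ≤ (h ω₀)⁻¹ * ⟪ω₀, x - z⟫ + t₀ := by
  classical
  -- h vanishes at the origin
  have h00 : h 0 = 0 := by
    have h2 := hhom 2 (by norm_num) 0
    rw [smul_zero] at h2; linarith
  -- a small ball around the origin inside C
  obtain ⟨ε, hε, hball⟩ := Metric.mem_nhds_iff.mp (mem_interior_iff_mem_nhds.mp h0)
  have memC : ∀ p : EuclideanSpace ℝ (Fin n), p ∈ setC h ↔ ∀ ω, ‖ω‖ = 1 → ⟪p, ω⟫ ≤ h ω := by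
    intro p
    simp only [setC, mem_iInter, mem_sphere_zero_iff_norm, mem_setOf_eq]
  -- norm bound on slopes
  have hnb : ∀ ω : EuclideanSpace ℝ (Fin n), h ω = 1 → ‖ω‖ ≤ 2 / ε := by
    intro ω hω1
    have hω0 : ω ≠ 0 := by rintro rfl; rw [h00] at hω1; norm_num at hω1
    have hn : 0 < ‖ω‖ := norm_pos_iff.mpr hω0
    set u := ‖ω‖⁻¹ • ω with hu
    have hun : ‖u‖ = 1 := by
      rw [hu, norm_smul, norm_inv, norm_norm, inv_mul_cancel₀ hn.ne']
    have hmem : (ε/2) • u ∈ setC h := by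
      apply hball
      rw [Metric.mem_ball, dist_zero_right, norm_smul, hun, mul_one,
        Real.norm_eq_abs, abs_of_pos (by linarith)]
      linarith
    have hle := (memC _).mp hmem u hun
    have hinner : ⟪(ε/2) • u, u⟫ = ε/2 := by
      rw [real_inner_smul_left, real_inner_self_eq_norm_sq, hun]; ring
    rw [hinner] at hle
    have hscal : h ω = ‖ω‖ * h u := by
      have h3 := hhom ‖ω‖ hn u
      rw [hu, smul_smul, mul_inv_cancel₀ hn.ne', one_smul] at h3
      exact h3
    have h4 : ‖ω‖ * (ε/2) ≤ ‖ω‖ * h u := mul_le_mul_of_nonneg_left hle hn.le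
    rw [le_div_iff₀ hε]
    nlinarith
  obtain ⟨y₀, hy₀⟩ := hKne
  -- admissible sets are bounded below
  have hbdd : ∀ p, BddBelow (admissible h K p) := by
    intro p
    refine ⟨-(2/ε * ‖p - y₀‖), ?_⟩
    rintro v ⟨ω, c, hω1, hKnn, rfl⟩
    have h1 : ⟪ω, p⟫ = ⟪ω, p - y₀⟫ + ⟪ω, y₀⟫ := by rw [inner_sub_right]; ring
    have h2 := hKnn y₀ hy₀
    have h3 : |⟪ω, p - y₀⟫| ≤ ‖ω‖ * ‖p - y₀‖ := abs_real_inner_le_norm _ _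
    have h4 : ‖ω‖ * ‖p - y₀‖ ≤ 2/ε * ‖p - y₀‖ :=
      mul_le_mul_of_nonneg_right (hnb ω hω1) (norm_nonneg _)
    have h5 := neg_abs_le ⟪ω, p - y₀⟫
    linarith
  -- admissible set is nonempty
  have hne : (admissible h K z).Nonempty := by
    by_contra hcon
    rw [Set.not_nonempty_iff_eq_empty] at hcon
    have he : admissible h K z₀ = ∅ := by
      ext v
      simp only [admissible, mem_setOf_eq, mem_empty_iff_false, iff_false]
      rintro ⟨ω, c, h1, h2, h3⟩
      have hmm : (⟪ω, z⟫ + c) ∈ admissible h K z := ⟨ω, c, h1, h2, rfl⟩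
      rw [hcon] at hmm; exact hmm
    have ha : dK h K z₀ = 0 := by rw [dK, he, Real.sInf_empty]
    have hb : dK h K z = 0 := by rw [dK, hcon, Real.sInf_empty]
    rw [ha] at hz₀; rw [hb] at hzt
    linarith
  -- the compact set of candidate affine functions
  set A : Set ((EuclideanSpace ℝ (Fin n)) × ℝ) :=
    {p | h p.1 = 1 ∧ (∀ y ∈ K, 0 ≤ ⟪p.1, y⟫ + p.2) ∧ ⟪p.1, z⟫ + p.2 ≤ t₀ + 1} with hA
  have hAne : A.Nonempty := by
    obtain ⟨a, ha, halt⟩ := Real.lt_sInf_add_pos hne one_pos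
    obtain ⟨ω, c, h1, h2, rfl⟩ := ha
    have hsInf : sInf (admissible h K z) = t₀ := hzt
    exact ⟨(ω, c), h1, h2, by rw [hsInf] at halt; linarith⟩
  have hAcl : IsClosed A := by
    have c1 : IsClosed {p : (EuclideanSpace ℝ (Fin n)) × ℝ | h p.1 = 1} :=
      isClosed_eq (hcont.comp continuous_fst) continuous_const
    have c2 : IsClosed {p : (EuclideanSpace ℝ (Fin n)) × ℝ | ∀ y ∈ K, 0 ≤ ⟪p.1, y⟫ + p.2} := by
      have heq : {p : (EuclideanSpace ℝ (Fin n)) × ℝ | ∀ y ∈ K, 0 ≤ ⟪p.1, y⟫ + p.2}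
          = ⋂ y ∈ K, {p : (EuclideanSpace ℝ (Fin n)) × ℝ | 0 ≤ ⟪p.1, y⟫ + p.2} := by
        ext p; simp [mem_iInter]
      rw [heq]
      exact isClosed_biInter fun y _ => isClosed_le continuous_const
        ((Continuous.inner continuous_fst continuous_const).add continuous_snd)
    have c3 : IsClosed {p : (EuclideanSpace ℝ (Fin n)) × ℝ | ⟪p.1, z⟫ + p.2 ≤ t₀ + 1} :=
      isClosed_le ((Continuous.inner continuous_fst continuous_const).add continuous_snd)
        continuous_const
    exact (c1.inter (c2.inter c3))
  have hAsub : A ⊆ (Metric.closedBall (0 : EuclideanSpace ℝ (Fin n)) (2/ε)) ×ˢ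
      (Set.Icc (-(2/ε * ‖y₀‖)) (t₀ + 1 + 2/ε * ‖z‖)) := by
    rintro ⟨ω, c⟩ ⟨h1, h2, h3⟩
    have hno : ‖ω‖ ≤ 2/ε := hnb ω h1
    have hb1 : |⟪ω, y₀⟫| ≤ ‖ω‖ * ‖y₀‖ := abs_real_inner_le_norm _ _
    have hb2 : ‖ω‖ * ‖y₀‖ ≤ 2/ε * ‖y₀‖ := mul_le_mul_of_nonneg_right hno (norm_nonneg _)
    have hb3 : |⟪ω, z⟫| ≤ ‖ω‖ * ‖z‖ := abs_real_inner_le_norm _ _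
    have hb4 : ‖ω‖ * ‖z‖ ≤ 2/ε * ‖z‖ := mul_le_mul_of_nonneg_right hno (norm_nonneg _)
    have h2' := h2 y₀ hy₀
    constructor
    · simpa [Metric.mem_closedBall, dist_zero_right] using hno
    · constructor
      · have := le_abs_self ⟪ω, y₀⟫; simp only []; linarith
      · have := neg_abs_le ⟪ω, z⟫; simp only []; linarith
  have hAcp : IsCompact A :=
    ((isCompact_closedBall _ _).prod isCompact_Icc).of_isClosed_subset hAcl hAsub
  -- minimize the value at z over A
  obtain ⟨⟨ωs, cs⟩, hmemA, hmin⟩ := hAcp.exists_isMinOn hAne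
    (((Continuous.inner continuous_fst (continuous_const : Continuous fun _ => z)).add
      continuous_snd).continuousOn)
  obtain ⟨h1s, h2s, h3s⟩ := hmemA
  -- minimum value is exactly t₀
  have hvt : ⟪ωs, z⟫ + cs = t₀ := by
    have hge : t₀ ≤ ⟪ωs, z⟫ + cs := by
      have := csInf_le (hbdd z) (⟨ωs, cs, h1s, h2s, rfl⟩ : (⟪ωs, z⟫ + cs) ∈ admissible h K z)
      rw [← hzt]; exact this
    have hle : ⟪ωs, z⟫ + cs ≤ t₀ := by
      by_contra hcon
      push_neg at hcon
      set δ := min (⟪ωs, z⟫ + cs - t₀) 1 with hδ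
      have hδpos : 0 < δ := lt_min (by linarith) one_pos
      obtain ⟨a, ha, halt⟩ := Real.lt_sInf_add_pos hne hδpos
      obtain ⟨ω, c, h1, h2, rfl⟩ := ha
      have hsInf : sInf (admissible h K z) = t₀ := hzt
      rw [hsInf] at halt
      have hd1 := min_le_left (⟪ωs, z⟫ + cs - t₀) 1
      have hd2 := min_le_right (⟪ωs, z⟫ + cs - t₀) 1
      have hmemA' : (ω, c) ∈ A := ⟨h1, h2, by linarith⟩
      have hmle := hmin hmemA'
      simp only [mem_setOf_eq, Pi.add_apply] at hmle
      linarith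
    linarith
  -- ℓ* dominates dK everywhere
  have hub : ∀ p, dK h K p ≤ ⟪ωs, p⟫ + cs := fun p =>
    csInf_le (hbdd p) ⟨ωs, cs, h1s, h2s, rfl⟩
  -- the touching point on ∂C
  have hRne : R ≠ 0 := hR.ne'
  let e : EuclideanSpace ℝ (Fin n) ≃ₜ EuclideanSpace ℝ (Fin n) :=
    (Homeomorph.smulOfNeZero R hRne).trans (Homeomorph.addLeft z₀)
  have he : ∀ y, e y = z₀ + R • y := fun y => rfl
  have himg : ballC (setC h) z₀ R = e '' (setC h) := by
    ext p; constructor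
    · rintro ⟨y, hy, rfl⟩; exact ⟨y, hy, (he y).symm ▸ rfl⟩
    · rintro ⟨y, hy, rfl⟩; exact ⟨y, hy, (he y)⟩
  obtain ⟨Q, hQf, hQz⟩ : ∃ Q, Q ∈ frontier (setC h) ∧ z = z₀ + R • Q := by
    have hz' := hz
    rw [himg, ← Homeomorph.image_frontier] at hz'
    obtain ⟨Q, hQ, hQe⟩ := hz'
    exact ⟨Q, hQ, by rw [← hQe, he]⟩
  -- support condition for -ω₀
  have hsup₀ : ∀ p ∈ setC h, ⟪-ω₀, p - Q⟫ ≤ 0 := by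
    intro p hp
    have hb : z₀ + R • p ∈ ballC (setC h) z₀ R := ⟨p, hp, rfl⟩
    have hn0 := hnormal _ hb
    have heq : (z₀ + R • p) - z = R • (p - Q) := by rw [hQz]; module
    rw [heq, real_inner_smul_right] at hn0
    have ht : 0 ≤ ⟪ω₀, p - Q⟫ := by
      have h' := div_nonneg hn0 hR.le
      rwa [mul_div_cancel_left₀ _ hRne] at h'
    rw [inner_neg_left]
    linarith
  -- support condition for -ωs/‖ωs‖
  have hωsne : ωs ≠ 0 := by
    intro hc; rw [hc, h00] at h1s; norm_num at h1s
  have hns : 0 < ‖ωs‖ := norm_pos_iff.mpr hωsne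
  have hsups : ∀ p ∈ setC h, ⟪-(‖ωs‖⁻¹ • ωs), p - Q⟫ ≤ 0 := by
    intro p hp
    have hb : z₀ + R • p ∈ ballC (setC h) z₀ R := ⟨p, hp, rfl⟩
    have hd : t₀ ≤ dK h K (z₀ + R • p) := hsub hb
    have hu := hub (z₀ + R • p)
    have heq : ⟪ωs, z₀ + R • p⟫ = ⟪ωs, z⟫ + R * ⟪ωs, p - Q⟫ := by
      have h1 : (z₀ + R • p) = z + R • (p - Q) := by rw [hQz]; module
      rw [h1, inner_add_right, real_inner_smul_right]
    have hRnn : 0 ≤ R * ⟪ωs, p - Q⟫ := by rw [heq] at hu; linarith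
    have ht : 0 ≤ ⟪ωs, p - Q⟫ := by
      have h' := div_nonneg hRnn hR.le
      rwa [mul_div_cancel_left₀ _ hRne] at h'
    rw [inner_neg_left, real_inner_smul_left]
    have hmul : 0 ≤ ‖ωs‖⁻¹ * ⟪ωs, p - Q⟫ := mul_nonneg (inv_nonneg.mpr hns.le) ht
    linarith
  -- uniqueness of the supporting normal
  have hω₀n : ‖ω₀‖ = 1 := mem_sphere_zero_iff_norm.mp hω₀
  have hmem₁ : -ω₀ ∈ sphere (0 : EuclideanSpace ℝ (Fin n)) 1 :=
    mem_sphere_zero_iff_norm.mpr (by rw [norm_neg, hω₀n])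
  have hmem₂ : -(‖ωs‖⁻¹ • ωs) ∈ sphere (0 : EuclideanSpace ℝ (Fin n)) 1 :=
    mem_sphere_zero_iff_norm.mpr
      (by rw [norm_neg, norm_smul, norm_inv, norm_norm, inv_mul_cancel₀ hns.ne'])
  have hequ := hC1 Q hQf (-ω₀) hmem₁ (-(‖ωs‖⁻¹ • ωs)) hmem₂ hsup₀ hsups
  have hωs_eq : ωs = ‖ωs‖ • ω₀ := by
    have h1 : ω₀ = ‖ωs‖⁻¹ • ωs := neg_injective hequ
    rw [h1, smul_smul, mul_inv_cancel₀ hns.ne', one_smul]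
  have hhs : ‖ωs‖ * h ω₀ = 1 := by
    have h1 := hhom ‖ωs‖ hns ω₀
    rw [← hωs_eq] at h1
    rw [← h1, h1s]
  have hninv : ‖ωs‖ = (h ω₀)⁻¹ := by
    field_simp
    linarith
  intro x
  calc dK h K x ≤ ⟪ωs, x⟫ + cs := hub x
    _ = ⟪ωs, x - z⟫ + (⟪ωs, z⟫ + cs) := by rw [inner_sub_right]; ring
    _ = (h ω₀)⁻¹ * ⟪ω₀, x - z⟫ + t₀ := by
        rw [hvt, hωs_eq, real_inner_smul_left, hninv]
end
end

section
/- For a nonempty closed convex K ⊆ ℝⁿ, the function d_K defined as an infimum of affine functions coincides with the anisotropic signed distance to ∂K: d_K(x) = inf{ ‖z − x‖_C : z ∈ ∂K } for x ∈ K, and d_K(x) = −inf{ ‖z − x‖_C : z ∈ ∂K } for x ∉ K. -/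
open Set Metric
open scoped RealInnerProductSpace Classical

noncomputable section

section Aux

variable {n : ℕ} {h : EuclideanSpace ℝ (Fin n) → ℝ}

lemma h_zero (hhom : IsPosHom h) : h 0 = 0 := by
  have := hhom 2 (by norm_num) 0
  rw [smul_zero] at this; linarith

lemma inner_le_of_memC (hhom : IsPosHom h) {x : EuclideanSpace ℝ (Fin n)}
    (hx : x ∈ setC h) (ω : EuclideanSpace ℝ (Fin n)) : ⟪x, ω⟫ ≤ h ω := by
  rcases eq_or_ne ω 0 with rfl | hω
  · rw [inner_zero_right, h_zero hhom]
  · have ht : (0:ℝ) < ‖ω‖ := norm_pos_iff.2 hω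
    set u : EuclideanSpace ℝ (Fin n) := ‖ω‖⁻¹ • ω with hu
    have husphere : u ∈ sphere (0 : EuclideanSpace ℝ (Fin n)) 1 := by
      simp [hu, norm_smul, abs_of_pos (inv_pos.2 ht), inv_mul_cancel₀ (ne_of_gt ht)]
    have hxu : ⟪x, u⟫ ≤ h u := by
      have := Set.mem_iInter₂.1 hx u husphere
      exact this
    have hrec : ω = ‖ω‖ • u := by rw [hu, smul_inv_smul₀ (ne_of_gt ht)]
    have h1 : ‖ω‖ * ⟪x, u⟫ = ⟪x, ω⟫ := by
      rw [hu, real_inner_smul_right, ← mul_assoc, mul_inv_cancel₀ (ne_of_gt ht), one_mul]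
    have h2 : h ω = ‖ω‖ * h u := by rw [← hhom _ ht u, ← hrec]
    nlinarith

lemma setC_isClosed : IsClosed (setC h) := by
  refine isClosed_biInter fun ω _ => ?_
  exact isClosed_le (Continuous.inner continuous_id continuous_const) continuous_const

lemma h_lower (hhom : IsPosHom h) {r : ℝ} (hr : 0 < r)
    (hball : closedBall (0 : EuclideanSpace ℝ (Fin n)) r ⊆ setC h)
    (ω : EuclideanSpace ℝ (Fin n)) : r * ‖ω‖ ≤ h ω := by
  rcases eq_or_ne ω 0 with rfl | hω
  · simp [h_zero hhom]
  · have ht : (0:ℝ) < ‖ω‖ := norm_pos_iff.2 hω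
    set x : EuclideanSpace ℝ (Fin n) := (r * ‖ω‖⁻¹) • ω with hx
    have hxmem : x ∈ closedBall (0 : EuclideanSpace ℝ (Fin n)) r := by
      simp only [mem_closedBall, dist_zero_right, hx, norm_smul, Real.norm_eq_abs]
      rw [abs_of_pos (mul_pos hr (inv_pos.2 ht))]
      rw [mul_assoc, inv_mul_cancel₀ (ne_of_gt ht), mul_one]
    have := inner_le_of_memC hhom (hball hxmem) ω
    rw [hx, real_inner_smul_left, real_inner_self_eq_norm_sq] at this
    calc r * ‖ω‖ = r * ‖ω‖⁻¹ * ‖ω‖^2 := by field_simp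
    _ ≤ h ω := this

lemma mem_setC_of_forall_T (hhom : IsPosHom h) {r : ℝ} (hr : 0 < r)
    (hball : closedBall (0 : EuclideanSpace ℝ (Fin n)) r ⊆ setC h)
    {z : EuclideanSpace ℝ (Fin n)}
    (hz : ∀ u : EuclideanSpace ℝ (Fin n), h u = 1 → ⟪z, u⟫ ≤ 1) : z ∈ setC h := by
  refine Set.mem_iInter₂.2 fun ω hω => ?_
  have hωn : ω ≠ 0 := by
    intro h0; rw [h0] at hω; simp at hω
  have hpos : 0 < h ω :=
    lt_of_lt_of_le (mul_pos hr (norm_pos_iff.2 hωn)) (h_lower hhom hr hball ω)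
  have hT : h ((h ω)⁻¹ • ω) = 1 := by
    rw [hhom _ (inv_pos.2 hpos), inv_mul_cancel₀ (ne_of_gt hpos)]
  have := hz _ hT
  rw [real_inner_smul_right] at this
  calc ⟪z, ω⟫ = h ω * ((h ω)⁻¹ * ⟪z, ω⟫) := by field_simp
  _ ≤ h ω * 1 := by nlinarith
  _ = h ω := mul_one _

end Aux

section NormC

variable {n : ℕ} {h : EuclideanSpace ℝ (Fin n) → ℝ} {C : Set (EuclideanSpace ℝ (Fin n))}
variable {r Rc : ℝ}

/-- the scaling set -/
def scalSet (C : Set (EuclideanSpace ℝ (Fin n))) (p : EuclideanSpace ℝ (Fin n)) : Set ℝ :=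
  {τ : ℝ | 0 < τ ∧ τ • p ∈ C}

lemma normC_def (p : EuclideanSpace ℝ (Fin n)) (hp : p ≠ 0) :
    normC C p = 1 / sSup (scalSet C p) := by
  rw [normC, if_neg hp]; rfl

lemma scalSet_nonempty (hr : 0 < r) (hball : closedBall (0 : EuclideanSpace ℝ (Fin n)) r ⊆ C)
    {p : EuclideanSpace ℝ (Fin n)} (hp : p ≠ 0) : (scalSet C p).Nonempty := by
  have hn : (0:ℝ) < ‖p‖ := norm_pos_iff.2 hp
  refine ⟨r / ‖p‖, div_pos hr hn, hball ?_⟩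
  simp only [mem_closedBall, dist_zero_right, norm_smul, Real.norm_eq_abs,
    abs_of_pos (div_pos hr hn)]
  rw [div_mul_cancel₀ _ (ne_of_gt hn)]

lemma scalSet_bddAbove (hRc : 0 < Rc) (hCbd : C ⊆ closedBall (0 : EuclideanSpace ℝ (Fin n)) Rc)
    {p : EuclideanSpace ℝ (Fin n)} (hp : p ≠ 0) : BddAbove (scalSet C p) := by
  have hn : (0:ℝ) < ‖p‖ := norm_pos_iff.2 hp
  refine ⟨Rc / ‖p‖, fun τ hτ => ?_⟩
  have h1 := hCbd hτ.2
  simp only [mem_closedBall, dist_zero_right, norm_smul, Real.norm_eq_abs,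
    abs_of_pos hτ.1] at h1
  rw [le_div_iff₀ hn]; exact h1

lemma div_norm_mem_scalSet (hr : 0 < r)
    (hball : closedBall (0 : EuclideanSpace ℝ (Fin n)) r ⊆ C)
    {p : EuclideanSpace ℝ (Fin n)} (hp : p ≠ 0) : r / ‖p‖ ∈ scalSet C p := by
  have hn : (0:ℝ) < ‖p‖ := norm_pos_iff.2 hp
  refine ⟨div_pos hr hn, hball ?_⟩
  simp only [mem_closedBall, dist_zero_right, norm_smul, Real.norm_eq_abs,
    abs_of_pos (div_pos hr hn)]
  rw [div_mul_cancel₀ _ (ne_of_gt hn)]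

lemma sSup_scalSet_pos (hr : 0 < r) (hball : closedBall (0 : EuclideanSpace ℝ (Fin n)) r ⊆ C)
    (hRc : 0 < Rc) (hCbd : C ⊆ closedBall (0 : EuclideanSpace ℝ (Fin n)) Rc)
    {p : EuclideanSpace ℝ (Fin n)} (hp : p ≠ 0) : 0 < sSup (scalSet C p) := by
  have hn : (0:ℝ) < ‖p‖ := norm_pos_iff.2 hp
  have h1 := le_csSup (scalSet_bddAbove hRc hCbd hp) (div_norm_mem_scalSet hr hball hp)
  exact lt_of_lt_of_le (div_pos hr hn) h1

lemma sSup_scalSet_le (hRc : 0 < Rc) (hCbd : C ⊆ closedBall (0 : EuclideanSpace ℝ (Fin n)) Rc)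
    (hr : 0 < r) (hball : closedBall (0 : EuclideanSpace ℝ (Fin n)) r ⊆ C)
    {p : EuclideanSpace ℝ (Fin n)} (hp : p ≠ 0) : sSup (scalSet C p) ≤ Rc / ‖p‖ := by
  have hn : (0:ℝ) < ‖p‖ := norm_pos_iff.2 hp
  refine csSup_le ⟨_, div_norm_mem_scalSet hr hball hp⟩ fun τ hτ => ?_
  have h1 := hCbd hτ.2
  simp only [mem_closedBall, dist_zero_right, norm_smul, Real.norm_eq_abs,
    abs_of_pos hτ.1] at h1
  rw [le_div_iff₀ hn]; exact h1

lemma normC_nonneg (hr : 0 < r) (hball : closedBall (0 : EuclideanSpace ℝ (Fin n)) r ⊆ C)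
    (hRc : 0 < Rc) (hCbd : C ⊆ closedBall (0 : EuclideanSpace ℝ (Fin n)) Rc)
    (p : EuclideanSpace ℝ (Fin n)) : 0 ≤ normC C p := by
  rcases eq_or_ne p 0 with rfl | hp
  · rw [normC, if_pos rfl]
  · rw [normC_def p hp]
    have := sSup_scalSet_pos hr hball hRc hCbd hp
    positivity

lemma normC_pos (hr : 0 < r) (hball : closedBall (0 : EuclideanSpace ℝ (Fin n)) r ⊆ C)
    (hRc : 0 < Rc) (hCbd : C ⊆ closedBall (0 : EuclideanSpace ℝ (Fin n)) Rc)
    {p : EuclideanSpace ℝ (Fin n)} (hp : p ≠ 0) : 0 < normC C p := by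
  rw [normC_def p hp]
  have := sSup_scalSet_pos hr hball hRc hCbd hp
  positivity

lemma norm_le_Rc_mul_normC (hr : 0 < r)
    (hball : closedBall (0 : EuclideanSpace ℝ (Fin n)) r ⊆ C)
    (hRc : 0 < Rc) (hCbd : C ⊆ closedBall (0 : EuclideanSpace ℝ (Fin n)) Rc)
    (p : EuclideanSpace ℝ (Fin n)) : ‖p‖ ≤ Rc * normC C p := by
  rcases eq_or_ne p 0 with rfl | hp
  · simp [normC]
  · rw [normC_def p hp]
    have hn : (0:ℝ) < ‖p‖ := norm_pos_iff.2 hp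
    have hσpos := sSup_scalSet_pos hr hball hRc hCbd hp
    have hσle := sSup_scalSet_le hRc hCbd hr hball hp
    rw [mul_one_div, le_div_iff₀ hσpos]
    calc ‖p‖ * sSup (scalSet C p) ≤ ‖p‖ * (Rc / ‖p‖) := by nlinarith
    _ = Rc := by field_simp

lemma sSup_smul_mem (hCcl : IsClosed C) (hr : 0 < r)
    (hball : closedBall (0 : EuclideanSpace ℝ (Fin n)) r ⊆ C)
    (hRc : 0 < Rc) (hCbd : C ⊆ closedBall (0 : EuclideanSpace ℝ (Fin n)) Rc)
    {p : EuclideanSpace ℝ (Fin n)} (hp : p ≠ 0) : sSup (scalSet C p) • p ∈ C := by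
  have hn : (0:ℝ) < ‖p‖ := norm_pos_iff.2 hp
  set σ := sSup (scalSet C p) with hσ
  rw [← hCcl.closure_eq]
  rw [Metric.mem_closure_iff]
  intro ε hε
  obtain ⟨τ, hτmem, hτgt⟩ := exists_lt_of_lt_csSup ⟨_, div_norm_mem_scalSet hr hball hp⟩
    (show σ - ε / ‖p‖ < σ by have := div_pos hε hn; linarith)
  refine ⟨τ • p, hτmem.2, ?_⟩
  have hτle : τ ≤ σ := le_csSup (scalSet_bddAbove hRc hCbd hp) hτmem
  rw [dist_eq_norm, ← sub_smul, norm_smul, Real.norm_eq_abs,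
    abs_of_nonneg (by linarith : (0:ℝ) ≤ σ - τ)]
  calc (σ - τ) * ‖p‖ < ε / ‖p‖ * ‖p‖ := by nlinarith
  _ = ε := by field_simp

lemma inner_le_h_mul_normC (hhom : IsPosHom h) (hCcl : IsClosed (setC h)) (hr : 0 < r)
    (hball : closedBall (0 : EuclideanSpace ℝ (Fin n)) r ⊆ setC h)
    (hRc : 0 < Rc) (hCbd : setC h ⊆ closedBall (0 : EuclideanSpace ℝ (Fin n)) Rc)
    (ω p : EuclideanSpace ℝ (Fin n)) : ⟪ω, p⟫ ≤ h ω * normC (setC h) p := by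
  rcases eq_or_ne p 0 with rfl | hp
  · simp [normC, h_zero hhom]
  · have hσpos := sSup_scalSet_pos hr hball hRc hCbd hp
    have hmem := sSup_smul_mem hCcl hr hball hRc hCbd hp
    have h1 := inner_le_of_memC hhom hmem ω
    rw [real_inner_smul_left] at h1
    rw [normC_def p hp, real_inner_comm]
    rw [mul_one_div, le_div_iff₀ hσpos]
    linarith [h1]

lemma normC_le_of_smul_mem (hRc : 0 < Rc)
    (hCbd : C ⊆ closedBall (0 : EuclideanSpace ℝ (Fin n)) Rc)
    {y : EuclideanSpace ℝ (Fin n)} (hy : y ∈ C) {t : ℝ} (ht : 0 ≤ t) :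
    normC C (t • y) ≤ t := by
  rcases eq_or_ne (t • y) 0 with h0 | h0
  · rw [normC, if_pos h0]; exact ht
  · have hyne : y ≠ 0 := by rintro rfl; simp at h0
    have htpos : 0 < t := by
      rcases ht.lt_or_eq with h' | h'
      · exact h'
      · exfalso; apply h0; rw [← h']; exact zero_smul _ _
    rw [normC_def _ h0]
    have hmem : t⁻¹ ∈ scalSet C (t • y) := by
      refine ⟨inv_pos.2 htpos, ?_⟩
      rw [smul_smul, inv_mul_cancel₀ (ne_of_gt htpos), one_smul]; exact hy
    have := le_csSup (scalSet_bddAbove hRc hCbd h0) hmem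
    have hσpos : 0 < sSup (scalSet C (t • y)) := lt_of_lt_of_le (inv_pos.2 htpos) this
    rw [div_le_iff₀ hσpos]
    calc (1:ℝ) = t * t⁻¹ := by field_simp
    _ ≤ t * sSup (scalSet C (t • y)) := by nlinarith

lemma normC_smul_le (hr : 0 < r) (hball : closedBall (0 : EuclideanSpace ℝ (Fin n)) r ⊆ C)
    (hRc : 0 < Rc) (hCbd : C ⊆ closedBall (0 : EuclideanSpace ℝ (Fin n)) Rc)
    {s : ℝ} (hs : 0 < s) (p : EuclideanSpace ℝ (Fin n)) :
    normC C (s • p) ≤ s * normC C p := by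
  rcases eq_or_ne p 0 with rfl | hp
  · simp [normC]
  · have hsp : s • p ≠ 0 := smul_ne_zero (ne_of_gt hs) hp
    rw [normC_def _ hp, normC_def _ hsp]
    have hσp := sSup_scalSet_pos hr hball hRc hCbd hp
    have hσsp := sSup_scalSet_pos hr hball hRc hCbd hsp
    have key : sSup (scalSet C p) ≤ s * sSup (scalSet C (s • p)) := by
      refine csSup_le ⟨_, div_norm_mem_scalSet hr hball hp⟩ fun τ hτ => ?_
      have hmem : τ / s ∈ scalSet C (s • p) := by
        refine ⟨div_pos hτ.1 hs, ?_⟩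
        rw [smul_smul, div_mul_cancel₀ _ (ne_of_gt hs)]
        exact hτ.2
      have := le_csSup (scalSet_bddAbove hRc hCbd hsp) hmem
      calc τ = s * (τ / s) := by field_simp
      _ ≤ s * sSup (scalSet C (s • p)) := by nlinarith
    rw [div_le_iff₀ hσsp, mul_comm s, mul_assoc, one_div]
    calc (1:ℝ) = (sSup (scalSet C p))⁻¹ * sSup (scalSet C p) :=
          (inv_mul_cancel₀ (ne_of_gt hσp)).symm
    _ ≤ (sSup (scalSet C p))⁻¹ * (s * sSup (scalSet C (s • p))) :=
          mul_le_mul_of_nonneg_left key (inv_nonneg.2 hσp.le)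

end NormC

section Sym

variable {n : ℕ} {h : EuclideanSpace ℝ (Fin n) → ℝ} {C : Set (EuclideanSpace ℝ (Fin n))}
variable {r Rc : ℝ}

lemma neg_mem_setC (heven : ∀ x, h (-x) = h x) {x : EuclideanSpace ℝ (Fin n)}
    (hx : x ∈ setC h) : -x ∈ setC h := by
  refine Set.mem_iInter₂.2 fun ω hω => ?_
  have hnω : -ω ∈ sphere (0 : EuclideanSpace ℝ (Fin n)) 1 := by
    simpa using hω
  have h1 := Set.mem_iInter₂.1 hx (-ω) hnω
  simp only [mem_setOf_eq, inner_neg_right] at h1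
  show ⟪-x, ω⟫ ≤ h ω
  rw [inner_neg_left]
  calc -⟪x, ω⟫ ≤ h (-ω) := h1
  _ = h ω := heven ω

lemma normC_neg (hsym : ∀ x ∈ C, -x ∈ C) (p : EuclideanSpace ℝ (Fin n)) :
    normC C (-p) = normC C p := by
  have hset : ∀ q : EuclideanSpace ℝ (Fin n), scalSet C (-q) = scalSet C q := by
    intro q
    ext τ
    constructor
    · rintro ⟨hτ, hmem⟩
      refine ⟨hτ, ?_⟩
      have := hsym _ hmem
      rwa [smul_neg, neg_neg] at this
    · rintro ⟨hτ, hmem⟩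
      refine ⟨hτ, ?_⟩
      rw [smul_neg]
      exact hsym _ hmem
  rcases eq_or_ne p 0 with rfl | hp
  · simp [normC]
  · rw [normC_def _ (neg_ne_zero.2 hp), normC_def _ hp, hset]

lemma ballC_convex (hconv : Convex ℝ C) (x : EuclideanSpace ℝ (Fin n)) (R : ℝ) :
    Convex ℝ (ballC C x R) := by
  rintro p ⟨y₁, hy₁, rfl⟩ q ⟨y₂, hy₂, rfl⟩ a b ha hb hab
  refine ⟨a • y₁ + b • y₂, hconv hy₁ hy₂ ha hb hab, ?_⟩
  have h1 : a • (x + R • y₁) + b • (x + R • y₂) = (a + b) • x + R • (a • y₁ + b • y₂) := by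
    module
  rw [h1, hab, one_smul]

lemma ball_subset_ballC (hr : 0 < r) (hball : closedBall (0 : EuclideanSpace ℝ (Fin n)) r ⊆ C)
    {R : ℝ} (hR : 0 < R) (x : EuclideanSpace ℝ (Fin n)) :
    ball x (R * r) ⊆ ballC C x R := by
  intro p hp
  refine ⟨R⁻¹ • (p - x), hball ?_, by simp [smul_smul, mul_inv_cancel₀ (ne_of_gt hR)]⟩
  simp only [mem_closedBall, dist_zero_right, norm_smul, Real.norm_eq_abs,
    abs_of_pos (inv_pos.2 hR)]
  rw [mem_ball, dist_eq_norm] at hp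
  rw [inv_mul_le_iff₀ hR]
  linarith [hp]

lemma mem_interior_ballC (hr : 0 < r) (hball : closedBall (0 : EuclideanSpace ℝ (Fin n)) r ⊆ C)
    {R : ℝ} (hR : 0 < R) (x : EuclideanSpace ℝ (Fin n)) : x ∈ interior (ballC C x R) := by
  rw [mem_interior]
  exact ⟨ball x (R * r), ball_subset_ballC hr hball hR x, isOpen_ball,
    mem_ball_self (by positivity)⟩

lemma normC_lt_of_mem_interior_ballC (hRc : 0 < Rc)
    (hCbd : C ⊆ closedBall (0 : EuclideanSpace ℝ (Fin n)) Rc)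
    {R : ℝ} (hR : 0 < R) {x q : EuclideanSpace ℝ (Fin n)}
    (hq : q ∈ interior (ballC C x R)) : normC C (q - x) < R := by
  rcases eq_or_ne q x with rfl | hqx
  · simp [normC, hR]
  · have hne : q - x ≠ 0 := sub_ne_zero.2 hqx
    have hn : (0:ℝ) < ‖q - x‖ := norm_pos_iff.2 hne
    obtain ⟨ε, hε, hballq⟩ := Metric.isOpen_iff.1 isOpen_interior q hq
    set η : ℝ := ε / (2 * ‖q - x‖) with hη
    have hηpos : 0 < η := by positivity
    have hq' : q + η • (q - x) ∈ ballC C x R := by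
      apply interior_subset
      apply hballq
      rw [mem_ball, dist_eq_norm]
      simp only [add_sub_cancel_left, norm_smul, Real.norm_eq_abs, abs_of_pos hηpos, hη]
      rw [abs_of_pos (by positivity : (0:ℝ) < ε / (2 * ‖q - x‖))]
      rw [div_mul_eq_mul_div, mul_comm]
      rw [mul_div_assoc]
      calc ‖q - x‖ * (ε / (2 * ‖q - x‖)) = ε / 2 := by field_simp
      _ < ε := by linarith
    obtain ⟨y, hy, hrep⟩ := hq'
    have hrep' : ((1 + η) / R) • (q - x) = y := by
      have : q + η • (q - x) - x = R • y := by rw [hrep]; abel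
      have h2 : (1 + η) • (q - x) = R • y := by
        rw [← this]; module
      have h3 : ((1 + η) / R) • (q - x) = (R⁻¹ * (1 + η)) • (q - x) := by
        rw [div_eq_inv_mul]
      rw [h3, mul_smul, h2, smul_smul, inv_mul_cancel₀ (ne_of_gt hR), one_smul]
    have hmem : (1 + η) / R ∈ scalSet C (q - x) := by
      refine ⟨by positivity, ?_⟩
      rw [hrep']; exact hy
    have hσ : (1 + η) / R ≤ sSup (scalSet C (q - x)) :=
      le_csSup (scalSet_bddAbove hRc hCbd hne) hmem
    have hσpos : 0 < sSup (scalSet C (q - x)) := lt_of_lt_of_le (by positivity) hσ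
    rw [normC_def _ hne, div_lt_iff₀ hσpos]
    calc (1:ℝ) < (1 + η) := by linarith
    _ = ((1 + η) / R) * R := by field_simp
    _ ≤ sSup (scalSet C (q - x)) * R := by nlinarith
    _ = R * sSup (scalSet C (q - x)) := mul_comm _ _

end Sym

section Helper

variable {n : ℕ}

lemma le_of_forall_pos_le_add' {a b : ℝ} (H : ∀ ε : ℝ, 0 < ε → a ≤ b + ε) : a ≤ b := by
  by_contra hc
  push_neg at hc
  have := H ((a - b) / 2) (by linarith)
  linarith

lemma le_on_closure_of_lt_on_interior {s : Set (EuclideanSpace ℝ (Fin n))}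
    (hs : Convex ℝ s) {f : EuclideanSpace ℝ (Fin n) →L[ℝ] ℝ} {u : ℝ}
    {x₀ : EuclideanSpace ℝ (Fin n)} (hx₀ : x₀ ∈ interior s)
    (H : ∀ a ∈ interior s, f a < u) {p : EuclideanSpace ℝ (Fin n)}
    (hp : p ∈ closure s) : f p ≤ u := by
  have hfx₀ : f x₀ < u := H x₀ hx₀
  have key : ∀ t : ℝ, 0 ≤ t → t < 1 → t * f p + (1 - t) * f x₀ < u := by
    intro t ht ht1
    have hmem : t • p + (1 - t) • x₀ ∈ interior s :=
      hs.combo_closure_interior_mem_interior hp hx₀ ht (by linarith) (by ring)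
    have := H _ hmem
    simpa [map_add, map_smul, smul_eq_mul] using this
  by_contra hc
  push_neg at hc
  set d : ℝ := f p - f x₀ with hd
  have hdpos : 0 < d := by simp only [hd]; linarith
  set q : ℝ := (u - f x₀) / d with hq
  have hq0 : 0 < q := div_pos (by linarith) hdpos
  have hq1 : q < 1 := by rw [hq, div_lt_one hdpos]; linarith
  set t : ℝ := (q + 1) / 2 with htdef
  have ht0 : 0 ≤ t := by simp only [htdef]; linarith
  have ht1 : t < 1 := by simp only [htdef]; linarith
  have hkey := key t ht0 ht1
  have htq : q < t := by simp only [htdef]; linarith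
  have h2 : q * d = u - f x₀ := by rw [hq, div_mul_cancel₀ _ (ne_of_gt hdpos)]
  have h3 : t * d > u - f x₀ := by
    calc u - f x₀ = q * d := h2.symm
    _ < t * d := by nlinarith
  have h4 : t * f p + (1 - t) * f x₀ = f x₀ + t * d := by simp only [hd]; ring
  linarith

end Helper

section Star

variable {n : ℕ} {h : EuclideanSpace ℝ (Fin n) → ℝ} {r Rc : ℝ}

/-- The key duality lemma: under the C¹ assumption, the support function of `C`
dominates `h`. -/
lemma exists_inner_ge_one (hcont : Continuous h) (hhom : IsPosHom h)
    (hconv : Convex ℝ (setC h)) (hC1 : UniqueSupport (setC h))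
    (hr : 0 < r) (hball : closedBall (0 : EuclideanSpace ℝ (Fin n)) r ⊆ setC h)
    (hRc : 0 < Rc) (hCbd : setC h ⊆ closedBall (0 : EuclideanSpace ℝ (Fin n)) Rc)
    {ω : EuclideanSpace ℝ (Fin n)} (hω : h ω = 1) :
    ∃ y ∈ setC h, 1 ≤ ⟪ω, y⟫ := by
  by_contra hcon
  push_neg at hcon
  have hωne : ω ≠ 0 := by
    intro h0; rw [h0, h_zero hhom] at hω; norm_num at hω
  have hωn : (0:ℝ) < ‖ω‖ := norm_pos_iff.2 hωne
  have hCcl : IsClosed (setC h) := setC_isClosed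
  have hCcpt : IsCompact (setC h) :=
    isCompact_of_isClosed_isBounded hCcl (isBounded_closedBall.subset hCbd)
  have hCne : (setC h).Nonempty := ⟨0, hball (mem_closedBall_self hr.le)⟩
  -- maximizer of ⟪ω, ·⟫ on C
  have hinncont : ContinuousOn (fun y : EuclideanSpace ℝ (Fin n) => ⟪ω, y⟫) (setC h) :=
    (Continuous.inner continuous_const continuous_id).continuousOn
  obtain ⟨y₀, hy₀C, hy₀max'⟩ := hCcpt.exists_isMaxOn hCne hinncont
  have hy₀max : ∀ y ∈ setC h, ⟪ω, y⟫ ≤ ⟪ω, y₀⟫ := fun y hy => hy₀max' hy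
  set M : ℝ := ⟪ω, y₀⟫ with hM
  have hMlt : M < 1 := hcon y₀ hy₀C
  have hMpos : 0 < M := by
    have hmem : (r * ‖ω‖⁻¹) • ω ∈ setC h := by
      apply hball
      simp only [mem_closedBall, dist_zero_right, norm_smul, Real.norm_eq_abs,
        abs_of_pos (mul_pos hr (inv_pos.2 hωn))]
      rw [mul_assoc, inv_mul_cancel₀ (ne_of_gt hωn), mul_one]
    have h1 := hy₀max _ hmem
    rw [real_inner_smul_right, real_inner_self_eq_norm_sq] at h1
    have h2 : 0 < r * ‖ω‖⁻¹ * ‖ω‖^2 := by positivity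
    linarith
  have hy₀ne : y₀ ≠ 0 := by
    intro h0; rw [h0, inner_zero_right] at hM; linarith
  -- the polar body
  set polar : Set (EuclideanSpace ℝ (Fin n)) :=
    {v | ∀ y ∈ setC h, ⟪v, y⟫ ≤ 1} with hpolar
  have hpolarconv : Convex ℝ polar := by
    intro v₁ hv₁ v₂ hv₂ a b ha hb hab
    intro y hy
    have e1 : ⟪a • v₁ + b • v₂, y⟫ = a * ⟪v₁, y⟫ + b * ⟪v₂, y⟫ := by
      rw [inner_add_left, real_inner_smul_left, real_inner_smul_left]
    rw [e1]
    calc a * ⟪v₁, y⟫ + b * ⟪v₂, y⟫ ≤ a * 1 + b * 1 := by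
          have := hv₁ y hy; have := hv₂ y hy
          apply add_le_add <;> nlinarith
    _ = 1 := by rw [mul_one, mul_one, hab]
  have hpolarcl : IsClosed polar := by
    have : polar = ⋂ y ∈ setC h, {v : EuclideanSpace ℝ (Fin n) | ⟪v, y⟫ ≤ 1} := by
      ext v; simp [hpolar, Set.mem_iInter₂]
    rw [this]
    exact isClosed_biInter fun y _ =>
      isClosed_le (Continuous.inner continuous_id continuous_const) continuous_const
  have h0polar : (0 : EuclideanSpace ℝ (Fin n)) ∈ interior polar := by
    rw [mem_interior]
    refine ⟨ball 0 (Rc⁻¹), ?_, isOpen_ball, mem_ball_self (by positivity)⟩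
    intro v hv y hy
    have h1 : ‖v‖ < Rc⁻¹ := by simpa [dist_zero_right] using hv
    have h2 : ‖y‖ ≤ Rc := by simpa [dist_zero_right] using hCbd hy
    calc ⟪v, y⟫ ≤ ‖v‖ * ‖y‖ := real_inner_le_norm v y
    _ ≤ Rc⁻¹ * Rc := by
        apply mul_le_mul h1.le h2 (norm_nonneg _) (by positivity)
    _ = 1 := inv_mul_cancel₀ (ne_of_gt hRc)
  -- v* : the witness deep outside T but on the boundary of polar
  set v' : EuclideanSpace ℝ (Fin n) := M⁻¹ • ω with hv'
  have hv'mem : v' ∈ polar := by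
    intro y hy
    rw [real_inner_smul_left]
    have := hy₀max y hy
    calc M⁻¹ * ⟪ω, y⟫ ≤ M⁻¹ * M := by
          apply mul_le_mul_of_nonneg_left _ (inv_pos.2 hMpos).le
          exact this
    _ = 1 := inv_mul_cancel₀ (ne_of_gt hMpos)
  have hv'y₀ : ⟪v', y₀⟫ = 1 := by
    rw [hv', real_inner_smul_left, ← hM, inv_mul_cancel₀ (ne_of_gt hMpos)]
  have hv'ne : v' ≠ 0 := by
    intro h0
    rw [h0, inner_zero_left] at hv'y₀; norm_num at hv'y₀
  have hv'notint : v' ∉ interior polar := by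
    intro hint
    obtain ⟨ε, hε, hb⟩ := Metric.isOpen_iff.1 isOpen_interior v' hint
    have hy₀n : (0:ℝ) < ‖y₀‖ := norm_pos_iff.2 hy₀ne
    set v'' : EuclideanSpace ℝ (Fin n) := v' + (ε / 2 * ‖y₀‖⁻¹) • y₀ with hv''
    have hv''mem : v'' ∈ polar := by
      apply interior_subset
      apply hb
      rw [mem_ball, dist_eq_norm, hv'']
      simp only [add_sub_cancel_left, norm_smul, Real.norm_eq_abs,
        abs_of_pos (by positivity : (0:ℝ) < ε / 2 * ‖y₀‖⁻¹)]
      rw [mul_assoc, inv_mul_cancel₀ (ne_of_gt hy₀n), mul_one]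
      linarith
    have h1 := hv''mem y₀ hy₀C
    rw [hv'', inner_add_left, hv'y₀, real_inner_smul_left, real_inner_self_eq_norm_sq] at h1
    have h2 : ε / 2 * ‖y₀‖⁻¹ * ‖y₀‖^2 = ε / 2 * ‖y₀‖ := by
      field_simp
    rw [h2] at h1
    nlinarith
  -- supporting functional at v'
  obtain ⟨f, hf⟩ := geometric_hahn_banach_open_point hpolarconv.interior
    isOpen_interior hv'notint
  have hfle : ∀ v ∈ polar, f v ≤ f v' := fun v hv =>
    le_on_closure_of_lt_on_interior hpolarconv h0polar hf (subset_closure hv)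
  have hfv'pos : 0 < f v' := by
    have := hf 0 h0polar
    rwa [map_zero] at this
  set w : EuclideanSpace ℝ (Fin n) := (InnerProductSpace.toDual ℝ _).symm f with hw
  have hwf : ∀ z, ⟪w, z⟫ = f z := fun z => InnerProductSpace.toDual_symm_apply
  set P : EuclideanSpace ℝ (Fin n) := (f v')⁻¹ • w with hP
  have hPv' : ⟪P, v'⟫ = 1 := by
    rw [hP, real_inner_smul_left, hwf, inv_mul_cancel₀ (ne_of_gt hfv'pos)]
  have hPle : ∀ v ∈ polar, ⟪P, v⟫ ≤ 1 := by
    intro v hv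
    rw [hP, real_inner_smul_left, hwf]
    calc (f v')⁻¹ * f v ≤ (f v')⁻¹ * f v' :=
          mul_le_mul_of_nonneg_left (hfle v hv) (inv_nonneg.2 hfv'pos.le)
    _ = 1 := inv_mul_cancel₀ (ne_of_gt hfv'pos)
  have hPne : P ≠ 0 := by
    intro h0; rw [h0, inner_zero_left] at hPv'; norm_num at hPv'
  -- T = unit level set of h, contained in polar
  have hTpolar : ∀ u : EuclideanSpace ℝ (Fin n), h u = 1 → u ∈ polar := by
    intro u hu y hy
    have := inner_le_of_memC hhom hy u
    rw [real_inner_comm]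
    rw [hu] at this; exact this
  -- P belongs to C
  have hPC : P ∈ setC h :=
    mem_setC_of_forall_T hhom hr hball fun u hu => hPle u (hTpolar u hu)
  -- P is on the frontier of C
  have hv'n : (0:ℝ) < ‖v'‖ := norm_pos_iff.2 hv'ne
  have hPfr : P ∈ frontier (setC h) := by
    rw [frontier, hCcl.closure_eq]
    refine ⟨hPC, fun hint => ?_⟩
    obtain ⟨ε, hε, hb⟩ := Metric.isOpen_iff.1 isOpen_interior P hint
    set P'' : EuclideanSpace ℝ (Fin n) := P + (ε / 2 * ‖v'‖⁻¹) • v' with hP''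
    have hP''C : P'' ∈ setC h := by
      apply interior_subset
      apply hb
      rw [mem_ball, dist_eq_norm, hP'']
      simp only [add_sub_cancel_left, norm_smul, Real.norm_eq_abs,
        abs_of_pos (by positivity : (0:ℝ) < ε / 2 * ‖v'‖⁻¹)]
      rw [mul_assoc, inv_mul_cancel₀ (ne_of_gt hv'n), mul_one]
      linarith
    have h1 := hv'mem P'' hP''C
    rw [hP'', inner_add_right, real_inner_comm P v', hPv', real_inner_smul_right,
      real_inner_self_eq_norm_sq] at h1
    have h2 : ε / 2 * ‖v'‖⁻¹ * ‖v'‖^2 = ε / 2 * ‖v'‖ := by field_simp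
    rw [h2] at h1
    nlinarith
  -- maximize ⟪P, ·⟫ over T
  set T : Set (EuclideanSpace ℝ (Fin n)) := {u | h u = 1} with hT
  have hTcl : IsClosed T := isClosed_singleton.preimage hcont
  have hTsub : T ⊆ closedBall (0 : EuclideanSpace ℝ (Fin n)) r⁻¹ := by
    intro u hu
    have := h_lower hhom hr hball u
    rw [hu] at this
    simp only [mem_closedBall, dist_zero_right]
    have h1 : ‖u‖ ≤ 1 / r := by
      rw [le_div_iff₀ hr]
      nlinarith
    rwa [one_div] at h1
  have hTcpt : IsCompact T :=
    (isCompact_closedBall _ _).of_isClosed_subset hTcl hTsub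
  have hTne : T.Nonempty := ⟨ω, hω⟩
  have hinncontP : ContinuousOn (fun u : EuclideanSpace ℝ (Fin n) => ⟪P, u⟫) T :=
    (Continuous.inner continuous_const continuous_id).continuousOn
  obtain ⟨u₁, hu₁T, hu₁max'⟩ := hTcpt.exists_isMaxOn hTne hinncontP
  have hu₁max : ∀ u ∈ T, ⟪P, u⟫ ≤ ⟪P, u₁⟫ := fun u hu => hu₁max' hu
  set μ : ℝ := ⟪P, u₁⟫ with hμ
  have hμle : μ ≤ 1 := hPle u₁ (hTpolar u₁ hu₁T)
  have hPn : (0:ℝ) < ‖P‖ := norm_pos_iff.2 hPne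
  have hhP : 0 < h P := lt_of_lt_of_le (mul_pos hr hPn) (h_lower hhom hr hball P)
  have hμpos : 0 < μ := by
    have huP : (h P)⁻¹ • P ∈ T := by
      show h ((h P)⁻¹ • P) = 1
      rw [hhom _ (inv_pos.2 hhP), inv_mul_cancel₀ (ne_of_gt hhP)]
    have h1 := hu₁max _ huP
    rw [real_inner_smul_right, real_inner_self_eq_norm_sq] at h1
    have h2 : 0 < (h P)⁻¹ * ‖P‖^2 := by positivity
    linarith
  rcases hμle.lt_or_eq with hμlt | hμeq
  · -- case μ < 1 : rescale P to land in C, contradiction with ⟪P, v'⟫ = 1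
    have hP'C : μ⁻¹ • P ∈ setC h := by
      apply mem_setC_of_forall_T hhom hr hball
      intro u hu
      rw [real_inner_smul_left]
      have := hu₁max u hu
      calc μ⁻¹ * ⟪P, u⟫ ≤ μ⁻¹ * μ :=
            mul_le_mul_of_nonneg_left this (inv_nonneg.2 hμpos.le)
      _ = 1 := inv_mul_cancel₀ (ne_of_gt hμpos)
    have h1 := hv'mem _ hP'C
    rw [real_inner_smul_right, real_inner_comm P v', hPv', mul_one] at h1
    have h2 : 1 < μ⁻¹ := by
      have h3 := mul_lt_mul_of_pos_left hμlt (inv_pos.2 hμpos)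
      rwa [inv_mul_cancel₀ (ne_of_gt hμpos), mul_one] at h3
    linarith
  · -- case μ = 1 : two distinct outer normals at P, contradiction with hC1
    have hu₁polar : u₁ ∈ polar := hTpolar u₁ hu₁T
    have hu₁ne : u₁ ≠ 0 := by
      intro h0
      rw [hT] at hu₁T
      rw [h0] at hu₁T
      have : h (0 : EuclideanSpace ℝ (Fin n)) = 1 := hu₁T
      rw [h_zero hhom] at this; norm_num at this
    have hu₁n : (0:ℝ) < ‖u₁‖ := norm_pos_iff.2 hu₁ne
    have hPu₁ : ⟪P, u₁⟫ = 1 := by rw [← hμ, ← hμeq]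
    -- both normalized vectors are outer normals at P
    set a : EuclideanSpace ℝ (Fin n) := ‖u₁‖⁻¹ • u₁ with ha
    set b : EuclideanSpace ℝ (Fin n) := ‖v'‖⁻¹ • v' with hb
    have has : a ∈ sphere (0 : EuclideanSpace ℝ (Fin n)) 1 := by
      simp [ha, norm_smul, abs_of_pos (inv_pos.2 hu₁n), inv_mul_cancel₀ (ne_of_gt hu₁n)]
    have hbs : b ∈ sphere (0 : EuclideanSpace ℝ (Fin n)) 1 := by
      simp [hb, norm_smul, abs_of_pos (inv_pos.2 hv'n), inv_mul_cancel₀ (ne_of_gt hv'n)]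
    have hna : ∀ x ∈ setC h, ⟪a, x - P⟫ ≤ 0 := by
      intro x hx
      rw [ha, real_inner_smul_left, inner_sub_right]
      have h1 : ⟪u₁, x⟫ ≤ 1 := hu₁polar x hx
      have h2 : ⟪u₁, P⟫ = 1 := by rw [real_inner_comm]; exact hPu₁
      rw [h2]
      apply mul_nonpos_of_nonneg_of_nonpos (inv_nonneg.2 hu₁n.le)
      linarith
    have hnb : ∀ x ∈ setC h, ⟪b, x - P⟫ ≤ 0 := by
      intro x hx
      rw [hb, real_inner_smul_left, inner_sub_right]
      have h1 : ⟪v', x⟫ ≤ 1 := hv'mem x hx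
      have h2 : ⟪v', P⟫ = 1 := by rw [real_inner_comm]; exact hPv'
      rw [h2]
      apply mul_nonpos_of_nonneg_of_nonpos (inv_nonneg.2 hv'n.le)
      linarith
    have hab : a = b := hC1 P hPfr a has b hbs hna hnb
    -- derive v' = t • u₁ with t = 1, contradiction with h v' = M⁻¹ > 1
    have hveq : v' = (‖v'‖ * ‖u₁‖⁻¹) • u₁ := by
      calc v' = ‖v'‖ • b := by
            rw [hb, smul_smul, mul_inv_cancel₀ (ne_of_gt hv'n), one_smul]
      _ = ‖v'‖ • a := by rw [hab]
      _ = (‖v'‖ * ‖u₁‖⁻¹) • u₁ := by rw [ha, smul_smul]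
    set t : ℝ := ‖v'‖ * ‖u₁‖⁻¹ with htdef
    have htpos : 0 < t := by positivity
    have ht1 : t = 1 := by
      have h1 : ⟪P, v'⟫ = t * ⟪P, u₁⟫ := by
        rw [hveq, real_inner_smul_right]
      rw [hPv', hPu₁, mul_one] at h1
      exact h1.symm
    have hv'1 : h v' = 1 := by
      rw [hveq, ht1, hhom _ one_pos]
      have : h u₁ = 1 := hu₁T
      rw [this]; ring
    have hMe : h v' = M⁻¹ := by
      rw [hv', hhom _ (inv_pos.2 hMpos), hω, mul_one]
    rw [hv'1] at hMe
    have : M = 1 := by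
      field_simp at hMe
      linarith
    linarith

end Star

section Support

variable {n : ℕ} {h : EuclideanSpace ℝ (Fin n) → ℝ} {K : Set (EuclideanSpace ℝ (Fin n))}
variable {r Rc : ℝ}

/-- supporting hyperplane at a frontier point of a closed convex set -/
lemma exists_support_at_frontier (hKcl : IsClosed K) (hKconv : Convex ℝ K)
    (hKne : K.Nonempty) {z : EuclideanSpace ℝ (Fin n)} (hz : z ∈ frontier K) :
    ∃ w : EuclideanSpace ℝ (Fin n), w ≠ 0 ∧ ∀ y ∈ K, ⟪w, z⟫ ≤ ⟪w, y⟫ := by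
  have hzK : z ∈ K := by
    rw [frontier, hKcl.closure_eq] at hz; exact hz.1
  rcases eq_empty_or_nonempty (interior K) with hint | hint
  · -- K has empty interior: contained in a proper affine subspace
    have hspan : affineSpan ℝ K ≠ ⊤ := by
      intro htop
      rw [← hKconv.interior_nonempty_iff_affineSpan_eq_top] at htop
      rw [hint] at htop
      exact not_nonempty_empty htop
    have hdir : (affineSpan ℝ K).direction ≠ ⊤ := by
      intro htop
      exact hspan ((AffineSubspace.direction_eq_top_iff_of_nonempty
        (hKne.mono (subset_affineSpan ℝ K))).1 htop)
    have hbot : ((affineSpan ℝ K).direction)ᗮ ≠ ⊥ := by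
      intro hb
      exact hdir (Submodule.orthogonal_eq_bot_iff.1 hb)
    obtain ⟨w, hwmem, hwne⟩ := Submodule.exists_mem_ne_zero_of_ne_bot hbot
    refine ⟨w, hwne, fun y hy => ?_⟩
    have hsub : y - z ∈ (affineSpan ℝ K).direction := by
      have h1 : y ∈ affineSpan ℝ K := subset_affineSpan ℝ K hy
      have h2 : z ∈ affineSpan ℝ K := subset_affineSpan ℝ K hzK
      have := AffineSubspace.vsub_mem_direction h1 h2
      simpa using this
    have : ⟪w, y - z⟫ = 0 := by
      have := (Submodule.mem_orthogonal _ _).1 hwmem (y - z) hsub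
      rw [real_inner_comm] at this
      exact this
    rw [inner_sub_right] at this
    linarith
  · -- K has nonempty interior
    have hznotint : z ∉ interior K := by
      rw [frontier, hKcl.closure_eq] at hz; exact hz.2
    obtain ⟨f, hf⟩ := geometric_hahn_banach_open_point hKconv.interior
      isOpen_interior hznotint
    obtain ⟨a₀, ha₀⟩ := hint
    have hfle : ∀ y ∈ K, f y ≤ f z := fun y hy =>
      le_on_closure_of_lt_on_interior hKconv ha₀ hf (subset_closure hy)
    set w : EuclideanSpace ℝ (Fin n) := -((InnerProductSpace.toDual ℝ _).symm f) with hw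
    have hwf : ∀ q, ⟪w, q⟫ = -(f q) := by
      intro q
      rw [hw, inner_neg_left, InnerProductSpace.toDual_symm_apply]
    refine ⟨w, ?_, fun y hy => ?_⟩
    · intro h0
      have h1 : f a₀ < f z := hf a₀ ha₀
      have h2 : ⟪w, a₀⟫ = 0 := by rw [h0, inner_zero_left]
      have h3 : ⟪w, z⟫ = 0 := by rw [h0, inner_zero_left]
      rw [hwf] at h2 h3
      linarith
    · rw [hwf, hwf]
      have := hfle y hy
      linarith

lemma admissible_nonempty (hhom : IsPosHom h) (hr : 0 < r)
    (hball : closedBall (0 : EuclideanSpace ℝ (Fin n)) r ⊆ setC h)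
    (hKcl : IsClosed K) (hKconv : Convex ℝ K) (hKne : K.Nonempty) (hKproper : K ≠ Set.univ)
    (x : EuclideanSpace ℝ (Fin n)) : (admissible h K x).Nonempty := by
  obtain ⟨p, hp⟩ : ∃ p, p ∉ K := by
    by_contra hc
    push_neg at hc
    exact hKproper (eq_univ_of_forall hc)
  obtain ⟨a₀, ha₀⟩ := hKne
  obtain ⟨f, u, hfK, hfp⟩ := geometric_hahn_banach_closed_point hKconv hKcl hp
  set w : EuclideanSpace ℝ (Fin n) := -((InnerProductSpace.toDual ℝ _).symm f) with hw
  have hwf : ∀ q, ⟪w, q⟫ = -(f q) := by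
    intro q
    rw [hw, inner_neg_left, InnerProductSpace.toDual_symm_apply]
  have hwne : w ≠ 0 := by
    intro h0
    have h2 : ⟪w, p⟫ = 0 := by rw [h0, inner_zero_left]
    have h3 : ⟪w, a₀⟫ = 0 := by rw [h0, inner_zero_left]
    rw [hwf] at h2 h3
    have h4 := hfK a₀ ha₀
    linarith
  have hwn : (0:ℝ) < ‖w‖ := norm_pos_iff.2 hwne
  have hhw : 0 < h w := lt_of_lt_of_le (mul_pos hr hwn) (h_lower hhom hr hball w)
  refine ⟨⟪(h w)⁻¹ • w, x⟫ + (h w)⁻¹ * u, (h w)⁻¹ • w, (h w)⁻¹ * u, ?_, ?_, rfl⟩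
  · rw [hhom _ (inv_pos.2 hhw), inv_mul_cancel₀ (ne_of_gt hhw)]
  · intro y hy
    rw [real_inner_smul_left, hwf]
    have := hfK y hy
    have h5 : (h w)⁻¹ * (u - f y) ≥ 0 := by
      apply mul_nonneg (inv_nonneg.2 hhw.le)
      linarith
    nlinarith [h5]

lemma admissible_bddBelow (hhom : IsPosHom h) (hr : 0 < r)
    (hball : closedBall (0 : EuclideanSpace ℝ (Fin n)) r ⊆ setC h)
    {y₀ : EuclideanSpace ℝ (Fin n)} (hy₀ : y₀ ∈ K)
    (x : EuclideanSpace ℝ (Fin n)) : BddBelow (admissible h K x) := by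
  refine ⟨-(r⁻¹ * ‖x - y₀‖), ?_⟩
  rintro v ⟨ω, c, hω1, hKpos, rfl⟩
  have hωne : ω ≠ 0 := by
    intro h0; rw [h0, h_zero hhom] at hω1; norm_num at hω1
  have hωnorm : ‖ω‖ ≤ r⁻¹ := by
    have := h_lower hhom hr hball ω
    rw [hω1] at this
    have h1 : ‖ω‖ ≤ 1 / r := by rw [le_div_iff₀ hr]; nlinarith
    rwa [one_div] at h1
  have h2 := hKpos y₀ hy₀
  have h3 : ⟪ω, x⟫ - ⟪ω, y₀⟫ = ⟪ω, x - y₀⟫ := by rw [inner_sub_right]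
  have h4 : |⟪ω, x - y₀⟫| ≤ ‖ω‖ * ‖x - y₀‖ := abs_real_inner_le_norm ω (x - y₀)
  have h5 : ‖ω‖ * ‖x - y₀‖ ≤ r⁻¹ * ‖x - y₀‖ :=
    mul_le_mul_of_nonneg_right hωnorm (norm_nonneg _)
  have h6 : -(r⁻¹ * ‖x - y₀‖) ≤ ⟪ω, x - y₀⟫ := by
    have := abs_le.1 h4
    linarith [this.1]
  linarith

end Support

set_option maxHeartbeats 2000000 in
/-- `d_K` coincides with the anisotropic signed distance to `∂K`. -/
theorem dK_eq_signed_dist (n : ℕ) (h : EuclideanSpace ℝ (Fin n) → ℝ)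
    (hcont : Continuous h) (hnonneg : ∀ x, 0 ≤ h x) (hhom : IsPosHom h)
    (heven : ∀ x, h (-x) = h x)
    (hbd : Bornology.IsBounded (setC h)) (hconv : Convex ℝ (setC h))
    (h0 : (0 : EuclideanSpace ℝ (Fin n)) ∈ interior (setC h))
    (hC1 : UniqueSupport (setC h))
    (K : Set (EuclideanSpace ℝ (Fin n))) (hKne : K.Nonempty) (hKcl : IsClosed K)
    (hKconv : Convex ℝ K) (hKproper : K ≠ Set.univ) :
    ∀ x : EuclideanSpace ℝ (Fin n),
      (x ∈ K → dK h K x = sInf {d : ℝ | ∃ z ∈ frontier K, d = normC (setC h) (z - x)}) ∧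
      (x ∉ K → dK h K x = -sInf {d : ℝ | ∃ z ∈ frontier K, d = normC (setC h) (z - x)}) := by
  classical
  -- inner radius
  obtain ⟨ε₀, hε₀, hball₀⟩ := Metric.mem_nhds_iff.1 (mem_interior_iff_mem_nhds.1 h0)
  set r : ℝ := ε₀ / 2 with hrdef
  have hr : 0 < r := by positivity
  have hball : closedBall (0 : EuclideanSpace ℝ (Fin n)) r ⊆ setC h :=
    (closedBall_subset_ball (by simp only [hrdef]; linarith)).trans hball₀
  -- outer radius
  obtain ⟨Rc, hRc, hCbd⟩ := hbd.subset_closedBall_lt 0 0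
  have hCcl : IsClosed (setC h) := setC_isClosed
  have hsym : ∀ p ∈ setC h, -p ∈ setC h := fun p hp => neg_mem_setC heven hp
  -- frontier of K is nonempty
  have hfrne : (frontier K).Nonempty := by
    rw [nonempty_iff_ne_empty]
    intro he
    rcases frontier_eq_empty_iff.1 he with h1 | h1
    · exact hKne.ne_empty h1
    · exact hKproper h1
  obtain ⟨y₀K, hy₀K⟩ := hKne
  intro x
  set F : Set ℝ := {d : ℝ | ∃ z ∈ frontier K, d = normC (setC h) (z - x)} with hF
  have hFne : F.Nonempty := ⟨_, ⟨hfrne.choose, hfrne.choose_spec, rfl⟩⟩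
  have hFbdd : BddBelow F := by
    refine ⟨0, ?_⟩
    rintro d ⟨z, hz, rfl⟩
    exact normC_nonneg hr hball hRc hCbd _
  have hadmne := admissible_nonempty hhom hr hball hKcl hKconv ⟨y₀K, hy₀K⟩ hKproper x
  have hadmbdd := admissible_bddBelow hhom hr hball hy₀K x
  constructor
  · -- x ∈ K
    intro hx
    apply le_antisymm
    · -- dK x ≤ sInf F
      apply le_csInf hFne
      rintro d ⟨z, hz, rfl⟩
      obtain ⟨w, hwne, hwsupp⟩ := exists_support_at_frontier hKcl hKconv ⟨y₀K, hy₀K⟩ hz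
      have hwn : (0:ℝ) < ‖w‖ := norm_pos_iff.2 hwne
      have hhw : 0 < h w := lt_of_lt_of_le (mul_pos hr hwn) (h_lower hhom hr hball w)
      set ω : EuclideanSpace ℝ (Fin n) := (h w)⁻¹ • w with hωdef
      have hω1 : h ω = 1 := by
        rw [hωdef, hhom _ (inv_pos.2 hhw), inv_mul_cancel₀ (ne_of_gt hhw)]
      have hadm : ⟪ω, x⟫ + -⟪ω, z⟫ ∈ admissible h K x := by
        refine ⟨ω, -⟪ω, z⟫, hω1, fun y hy => ?_, rfl⟩
        rw [hωdef, real_inner_smul_left, real_inner_smul_left]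
        have := hwsupp y hy
        have h5 : (h w)⁻¹ * (⟪w, y⟫ - ⟪w, z⟫) ≥ 0 :=
          mul_nonneg (inv_nonneg.2 hhw.le) (by linarith)
        nlinarith [h5]
      calc dK h K x ≤ ⟪ω, x⟫ + -⟪ω, z⟫ := csInf_le hadmbdd hadm
      _ = ⟪ω, x - z⟫ := by rw [inner_sub_right]; ring
      _ ≤ h ω * normC (setC h) (x - z) :=
            inner_le_h_mul_normC hhom hCcl hr hball hRc hCbd ω (x - z)
      _ = normC (setC h) (x - z) := by rw [hω1, one_mul]
      _ = normC (setC h) (z - x) := by rw [← normC_neg hsym (z - x), neg_sub]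
    · -- sInf F ≤ dK x
      apply le_csInf hadmne
      rintro v ⟨ω, c, hω1, hKpos, rfl⟩
      have hωne : ω ≠ 0 := by
        intro h0'; rw [h0', h_zero hhom] at hω1; norm_num at hω1
      have hωn : (0:ℝ) < ‖ω‖ := norm_pos_iff.2 hωne
      have hv0 : 0 ≤ ⟪ω, x⟫ + c := hKpos x hx
      obtain ⟨ys, hysC, hys⟩ :=
        exists_inner_ge_one hcont hhom hconv hC1 hr hball hRc hCbd hω1
      set A : Set ℝ := Icc (0:ℝ) (⟪ω, x⟫ + c) ∩ {t : ℝ | x - t • ys ∈ K} with hA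
      have hAcl : IsClosed A := by
        apply IsClosed.inter isClosed_Icc
        exact hKcl.preimage (continuous_const.sub (continuous_id.smul continuous_const))
      have hAne : A.Nonempty := by
        refine ⟨0, ⟨le_refl 0, hv0⟩, ?_⟩
        show x - (0:ℝ) • ys ∈ K
        rw [zero_smul, sub_zero]; exact hx
      have hAbdd : BddAbove A := ⟨⟪ω, x⟫ + c, fun t ht => ht.1.2⟩
      set ts : ℝ := sSup A with hts
      have htsA : ts ∈ A := hAcl.csSup_mem hAne hAbdd
      obtain ⟨⟨ht0, htv⟩, hzK⟩ := htsA
      set z : EuclideanSpace ℝ (Fin n) := x - ts • ys with hz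
      have hzK' : z ∈ K := hzK
      have hznotint : z ∉ interior K := by
        intro hint
        obtain ⟨ε, hε, hb⟩ := Metric.isOpen_iff.1 isOpen_interior z hint
        rcases htv.lt_or_eq with hlt | heq
        · set δ : ℝ := min (⟪ω, x⟫ + c - ts) (ε / 2 / (‖ys‖ + 1)) with hδ
          have hδpos : 0 < δ := by
            apply lt_min (by linarith)
            positivity
          have hmem : ts + δ ∈ A := by
            refine ⟨⟨by linarith, ?_⟩, ?_⟩
            · have : δ ≤ ⟪ω, x⟫ + c - ts := min_le_left _ _
              linarith
            · show x - (ts + δ) • ys ∈ K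
              apply interior_subset
              apply hb
              rw [mem_ball, dist_eq_norm]
              have he : x - (ts + δ) • ys - z = -(δ • ys) := by
                rw [hz]; module
              rw [he, norm_neg, norm_smul, Real.norm_eq_abs, abs_of_pos hδpos]
              have h6 : δ ≤ ε / 2 / (‖ys‖ + 1) := min_le_right _ _
              have h7 : δ * ‖ys‖ ≤ δ * (‖ys‖ + 1) := by nlinarith
              have h8 : δ * (‖ys‖ + 1) ≤ ε / 2 / (‖ys‖ + 1) * (‖ys‖ + 1) := by
                apply mul_le_mul_of_nonneg_right h6 (by positivity)
              have h9 : ε / 2 / (‖ys‖ + 1) * (‖ys‖ + 1) = ε / 2 :=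
                div_mul_cancel₀ _ (by positivity)
              linarith
          have := le_csSup hAbdd hmem
          rw [← hts] at this
          linarith
        · -- ts = ⟪ω, x⟫ + c
          have hval : ⟪ω, z⟫ + c ≤ 0 := by
            rw [hz, inner_sub_right, real_inner_smul_right]
            have h6 : (0:ℝ) ≤ (⟪ω, x⟫ + c) * (⟪ω, ys⟫ - 1) :=
              mul_nonneg hv0 (by linarith)
            nlinarith [h6, heq]
          set z' : EuclideanSpace ℝ (Fin n) := z - (ε / 2 * ‖ω‖⁻¹) • ω with hz'
          have hz'K : z' ∈ K := by
            apply interior_subset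
            apply hb
            rw [mem_ball, dist_eq_norm, hz']
            simp only [sub_sub_cancel_left, norm_neg, norm_smul, Real.norm_eq_abs,
              abs_of_pos (by positivity : (0:ℝ) < ε / 2 * ‖ω‖⁻¹)]
            rw [mul_assoc, inv_mul_cancel₀ (ne_of_gt hωn), mul_one]
            linarith
          have h7 := hKpos z' hz'K
          rw [hz', inner_sub_right, real_inner_smul_right, real_inner_self_eq_norm_sq] at h7
          have h8 : ε / 2 * ‖ω‖⁻¹ * ‖ω‖^2 = ε / 2 * ‖ω‖ := by field_simp
          rw [h8] at h7
          nlinarith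
      have hzfr : z ∈ frontier K := by
        rw [frontier, hKcl.closure_eq]; exact ⟨hzK', hznotint⟩
      calc sInf F ≤ normC (setC h) (z - x) := csInf_le hFbdd ⟨z, hzfr, rfl⟩
      _ = normC (setC h) (ts • ys) := by
            have he : z - x = -(ts • ys) := by rw [hz]; module
            rw [he, normC_neg hsym]
      _ ≤ ts := normC_le_of_smul_mem hRc hCbd hysC ht0
      _ ≤ ⟪ω, x⟫ + c := htv
  · -- x ∉ K
    intro hx
    set S : Set ℝ := {d : ℝ | ∃ z ∈ K, d = normC (setC h) (z - x)} with hS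
    have hSne : S.Nonempty := ⟨_, ⟨y₀K, hy₀K, rfl⟩⟩
    have hSbdd : BddBelow S := by
      refine ⟨0, ?_⟩
      rintro d ⟨z, hz, rfl⟩
      exact normC_nonneg hr hball hRc hCbd _
    have hRD : sInf S ≤ sInf F := by
      apply csInf_le_csInf hSbdd hFne
      rintro d ⟨z, hz, rfl⟩
      exact ⟨z, hKcl.frontier_subset hz, rfl⟩
    have hRpos : 0 < sInf S := by
      obtain ⟨ε, hε, hb⟩ := Metric.isOpen_iff.1 hKcl.isOpen_compl x hx
      have key : ∀ d ∈ S, ε / Rc ≤ d := by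
        rintro d ⟨z, hz, rfl⟩
        have h1 : ε ≤ ‖z - x‖ := by
          by_contra hc
          push_neg at hc
          exact (hb (by rwa [mem_ball, dist_eq_norm])) hz
        have h2 := norm_le_Rc_mul_normC hr hball hRc hCbd (z - x)
        rw [div_le_iff₀ hRc]
        calc ε ≤ ‖z - x‖ := h1
        _ ≤ Rc * normC (setC h) (z - x) := h2
        _ = normC (setC h) (z - x) * Rc := mul_comm _ _
      exact lt_of_lt_of_le (by positivity) (le_csInf hSne key)
    have hDR : sInf F ≤ sInf S := by
      apply le_of_forall_pos_le_add'
      intro ε' hε'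
      obtain ⟨d, hdS, hdlt⟩ := exists_lt_of_csInf_lt hSne
        (lt_add_of_pos_right (sInf S) hε')
      obtain ⟨z', hz'K, rfl⟩ := hdS
      set A : Set ℝ := Icc (0:ℝ) 1 ∩ {s : ℝ | x + s • (z' - x) ∈ K} with hA
      have hAcl : IsClosed A := by
        apply IsClosed.inter isClosed_Icc
        exact hKcl.preimage (continuous_const.add (continuous_id.smul continuous_const))
      have hAne : A.Nonempty := by
        refine ⟨1, ⟨zero_le_one, le_refl 1⟩, ?_⟩
        show x + (1:ℝ) • (z' - x) ∈ K
        rw [one_smul]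
        have : x + (z' - x) = z' := by abel
        rw [this]; exact hz'K
      have hAbdd : BddBelow A := ⟨0, fun t ht => ht.1.1⟩
      set ts : ℝ := sInf A with hts
      have htsA : ts ∈ A := hAcl.csInf_mem hAne hAbdd
      obtain ⟨⟨ht0, ht1⟩, hzK⟩ := htsA
      set z : EuclideanSpace ℝ (Fin n) := x + ts • (z' - x) with hz
      have hzK' : z ∈ K := hzK
      have htspos : 0 < ts := by
        rcases ht0.lt_or_eq with h1 | h1
        · exact h1
        · exfalso
          apply hx
          have : z = x := by rw [hz, ← h1, zero_smul, add_zero]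
          rw [← this]; exact hzK'
      have hznotint : z ∉ interior K := by
        intro hint
        obtain ⟨ε₂, hε₂, hb⟩ := Metric.isOpen_iff.1 isOpen_interior z hint
        set δ : ℝ := min (ts / 2) (ε₂ / 2 / (‖z' - x‖ + 1)) with hδ
        have hδpos : 0 < δ := lt_min (by linarith) (by positivity)
        have hδts : δ ≤ ts / 2 := min_le_left _ _
        have hmem : ts - δ ∈ A := by
          refine ⟨⟨by linarith, by linarith⟩, ?_⟩
          show x + (ts - δ) • (z' - x) ∈ K
          apply interior_subset
          apply hb
          rw [mem_ball, dist_eq_norm]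
          have he : x + (ts - δ) • (z' - x) - z = -(δ • (z' - x)) := by
            rw [hz]; module
          rw [he, norm_neg, norm_smul, Real.norm_eq_abs, abs_of_pos hδpos]
          have h6 : δ ≤ ε₂ / 2 / (‖z' - x‖ + 1) := min_le_right _ _
          have h7 : δ * ‖z' - x‖ ≤ δ * (‖z' - x‖ + 1) := by nlinarith
          have h8 : δ * (‖z' - x‖ + 1) ≤ ε₂ / 2 / (‖z' - x‖ + 1) * (‖z' - x‖ + 1) :=
            mul_le_mul_of_nonneg_right h6 (by positivity)
          have h9 : ε₂ / 2 / (‖z' - x‖ + 1) * (‖z' - x‖ + 1) = ε₂ / 2 :=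
            div_mul_cancel₀ _ (by positivity)
          linarith
        have := csInf_le hAbdd hmem
        rw [← hts] at this
        linarith
      have hzfr : z ∈ frontier K := by
        rw [frontier, hKcl.closure_eq]; exact ⟨hzK', hznotint⟩
      have hch : sInf F ≤ normC (setC h) (z - x) := csInf_le hFbdd ⟨z, hzfr, rfl⟩
      have he2 : z - x = ts • (z' - x) := by rw [hz]; abel
      have h10 : normC (setC h) (z - x) ≤ ts * normC (setC h) (z' - x) := by
        rw [he2]
        exact normC_smul_le hr hball hRc hCbd htspos (z' - x)
      have h11 : ts * normC (setC h) (z' - x) ≤ normC (setC h) (z' - x) := by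
        have := normC_nonneg hr hball hRc hCbd (z' - x)
        nlinarith
      linarith
    apply le_antisymm
    · -- dK x ≤ -sInf F
      set B : Set (EuclideanSpace ℝ (Fin n)) := ballC (setC h) x (sInf S) with hB
      have hBconv : Convex ℝ B := ballC_convex hconv x (sInf S)
      have hxint : x ∈ interior B := mem_interior_ballC hr hball hRpos x
      have hdisj : Disjoint (interior B) K := by
        rw [Set.disjoint_left]
        intro p hp hpK
        have h1 := normC_lt_of_mem_interior_ballC hRc hCbd hRpos hp
        have h2 : sInf S ≤ normC (setC h) (p - x) := csInf_le hSbdd ⟨p, hpK, rfl⟩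
        linarith
      obtain ⟨f, u, hfB, hfK⟩ :=
        geometric_hahn_banach_open hBconv.interior isOpen_interior hKconv hdisj
      have hfleB : ∀ p ∈ B, f p ≤ u := fun p hp =>
        le_on_closure_of_lt_on_interior hBconv hxint hfB (subset_closure hp)
      set w : EuclideanSpace ℝ (Fin n) := (InnerProductSpace.toDual ℝ _).symm f with hw
      have hwf : ∀ q, ⟪w, q⟫ = f q := fun q => InnerProductSpace.toDual_symm_apply
      have hwne : w ≠ 0 := by
        intro h0'
        have h1 : f x < u := hfB x hxint
        have h2 : u ≤ f y₀K := hfK y₀K hy₀K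
        have h3 : ⟪w, x⟫ = 0 := by rw [h0', inner_zero_left]
        have h4 : ⟪w, y₀K⟫ = 0 := by rw [h0', inner_zero_left]
        rw [hwf] at h3 h4
        linarith
      have hwn : (0:ℝ) < ‖w‖ := norm_pos_iff.2 hwne
      have hhw : 0 < h w := lt_of_lt_of_le (mul_pos hr hwn) (h_lower hhom hr hball w)
      set ω : EuclideanSpace ℝ (Fin n) := (h w)⁻¹ • w with hωdef
      have hω1 : h ω = 1 := by
        rw [hωdef, hhom _ (inv_pos.2 hhw), inv_mul_cancel₀ (ne_of_gt hhw)]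
      have hadm : ⟪ω, x⟫ + -((h w)⁻¹ * u) ∈ admissible h K x := by
        refine ⟨ω, -((h w)⁻¹ * u), hω1, fun y hy => ?_, rfl⟩
        rw [hωdef, real_inner_smul_left, hwf]
        have := hfK y hy
        have h5 : (h w)⁻¹ * (f y - u) ≥ 0 :=
          mul_nonneg (inv_nonneg.2 hhw.le) (by linarith)
        nlinarith [h5]
      obtain ⟨y₁, hy₁C, hy₁⟩ :=
        exists_inner_ge_one hcont hhom hconv hC1 hr hball hRc hCbd hω1
      have hwy₁ : h w ≤ ⟪w, y₁⟫ := by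
        rw [hωdef, real_inner_smul_left] at hy₁
        have h6 := mul_le_mul_of_nonneg_left hy₁ hhw.le
        rw [mul_one, ← mul_assoc, mul_inv_cancel₀ (ne_of_gt hhw), one_mul] at h6
        exact h6
      have hfxRu : f x + sInf S * ⟪w, y₁⟫ ≤ u := by
        have hmemB : x + sInf S • y₁ ∈ B := ⟨y₁, hy₁C, rfl⟩
        have h7 := hfleB _ hmemB
        rw [map_add, map_smul, smul_eq_mul] at h7
        rw [hwf]
        exact h7
      have hval : ⟪ω, x⟫ + -((h w)⁻¹ * u) ≤ -(sInf S) := by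
        rw [hωdef, real_inner_smul_left, hwf]
        have h8 : sInf S * (h w) ≤ sInf S * ⟪w, y₁⟫ :=
          mul_le_mul_of_nonneg_left hwy₁ hRpos.le
        have h9 : f x ≤ u - sInf S * (h w) := by linarith
        have h10 : (h w)⁻¹ * f x ≤ (h w)⁻¹ * (u - sInf S * (h w)) :=
          mul_le_mul_of_nonneg_left h9 (inv_nonneg.2 hhw.le)
        have h11 : (h w)⁻¹ * (u - sInf S * (h w)) =
            (h w)⁻¹ * u - sInf S := by
          field_simp
        linarith [h10, h11.symm.le]
      calc dK h K x ≤ ⟪ω, x⟫ + -((h w)⁻¹ * u) := csInf_le hadmbdd hadm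
      _ ≤ -(sInf S) := hval
      _ ≤ -sInf F := by linarith
    · -- -sInf F ≤ dK x
      apply le_csInf hadmne
      rintro v ⟨ω, c, hω1, hKpos, rfl⟩
      have key : ∀ ε : ℝ, 0 < ε → -(⟪ω, x⟫ + c) ≤ sInf F + ε := by
        intro ε hε
        obtain ⟨d, hdF, hdlt⟩ := exists_lt_of_csInf_lt hFne
          (lt_add_of_pos_right (sInf F) hε)
        obtain ⟨z, hzfr, rfl⟩ := hdF
        have hzK : z ∈ K := hKcl.frontier_subset hzfr
        have h1 : 0 ≤ ⟪ω, z⟫ + c := hKpos z hzK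
        have h2 : ⟪ω, z - x⟫ ≤ h ω * normC (setC h) (z - x) :=
          inner_le_h_mul_normC hhom hCcl hr hball hRc hCbd ω (z - x)
        rw [hω1, one_mul] at h2
        rw [inner_sub_right] at h2
        linarith
      have := le_of_forall_pos_le_add' key
      linarith
end
end
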